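/- arXiv:1612.00692 — 3 statements merged into one kernel-verified Lean document; each statement's English description precedes it below -/
import Mathlib

section
/- Let X₁, X₂, … be i.i.d. real random variables whose common distribution is regularly varying: ρⁿ P(b_n^{-1} X₁ ∈ ·) converges vaguely on [-∞,∞]\{0} to ν_α, where ν_α(dx) = βα x^{-α-1}1(x>0)dx + (1-β)α(-x)^{-α-1}1(x<0)dx. Then the law of the sequence X = (X₁, X₂, …) is regularly varying on ℝ^ℕ \ {0_∞} with limit measure λ_iid concentrated on the axes: λ_iid(dx) = Σ_{i=1}^∞ ⊗_{j<i} δ₀(dx_j) ⊗ ν_α(dx_i) ⊗_{j>i} δ₀(dx_j); i.e. ρⁿ P(b_n^{-1} X ∈ ·) converges in the Hult–Lindskog sense to λ_iid on ℝ^ℕ \ {0_∞}. -/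
/-!
Since `F` vanishes on a neighbourhood of `0` in the product topology, there are a finite set `s`
of coordinates and `δ > 0` such that `F y = 0` as soon as `|y j| < δ` for all `j ∈ s`. Hence
`∫ F dλ_iid = ∑ i ∈ s, ∫ F (x eᵢ) ν_α(dx)`, and each summand is the limit of
`ρⁿ E F(bₙ⁻¹ Xᵢ eᵢ)` by the marginal assumption. It remains to show that
`ρⁿ E |F(bₙ⁻¹ X) - ∑ i ∈ s, F(bₙ⁻¹ Xᵢ eᵢ)| → 0`.

If no coordinate in `s` is large, both terms vanish. If coordinate `i` is large but at most `M`,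
and finitely many other coordinates are small, then `bₙ⁻¹ X` is close to the compact segment
`{x eᵢ : |x| ≤ M}` of the `i`-th axis, where `F` is uniformly continuous. What is left are the
events that one coordinate exceeds `M`, whose weighted probability is uniformly small for large
`M` because `ν_α` has vanishing tails, and that two coordinates are large, whose weighted
probability is `ρⁿ P(·) P(·) = O(ρ⁻ⁿ)` by independence.
-/

open MeasureTheory ProbabilityTheory Filter Topology

/-- The measure `ν_α(dx) = βα x^{-α-1} 1(x>0) dx + (1-β)α(-x)^{-α-1} 1(x<0) dx`. -/
noncomputable def nuAlpha (α β : ℝ) : Measure ℝ :=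
  MeasureTheory.volume.withDensity fun x =>
    ENNReal.ofReal
      (if 0 < x then β * α * x ^ (-α - 1)
       else if x < 0 then (1 - β) * α * (-x) ^ (-α - 1) else 0)

/-- The limit measure `λ_iid = Σ_i δ₀ ⊗ ⋯ ⊗ ν_α (i-th coordinate) ⊗ δ₀ ⊗ ⋯`,
concentrated on the axes of `ℝ^ℕ`. -/
noncomputable def lamIid (α β : ℝ) : Measure (ℕ → ℝ) :=
  Measure.sum fun i : ℕ =>
    Measure.map (fun x : ℝ => Function.update (0 : ℕ → ℝ) i x) (nuAlpha α β)

open Set Function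
open scoped ENNReal

lemma rpow_neg_le_mul_one_add_rpow_neg {c t p : ℝ} (hc : 0 < c) (hct : c ≤ t) (hp : 0 ≤ p) :
    t ^ (-p) ≤ ((1 + c) / c) ^ p * (1 + t) ^ (-p) := by
  have ht : 0 < t := hc.trans_le hct
  have hratio : (1 + t) / t ≤ (1 + c) / c := by
    rw [div_le_div_iff₀ ht hc]; nlinarith
  calc t ^ (-p) = ((1 + t) / t) ^ p * (1 + t) ^ (-p) := by
        rw [Real.div_rpow (by positivity) ht.le, Real.rpow_neg (by positivity : (0:ℝ) ≤ 1 + t),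
          Real.rpow_neg ht.le]
        have : 0 < (1 + t) ^ p := by positivity
        field_simp
    _ ≤ ((1 + c) / c) ^ p * (1 + t) ^ (-p) := by
        gcongr

lemma nuAlpha_le_withDensity {α β : ℝ} (hα : 0 ≤ α) (hβ₀ : 0 ≤ β) (hβ₁ : β ≤ 1) :
    nuAlpha α β ≤ volume.withDensity fun x => ENNReal.ofReal (α * |x| ^ (-α - 1)) := by
  refine withDensity_mono (ae_of_all _ fun x => ENNReal.ofReal_le_ofReal ?_)
  rcases lt_trichotomy 0 x with hx | rfl | hx
  · rw [if_pos hx, abs_of_pos hx]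
    exact mul_le_mul_of_nonneg_right (mul_le_of_le_one_left hα hβ₁)
      (Real.rpow_nonneg hx.le _)
  · simpa using mul_nonneg hα (Real.rpow_nonneg le_rfl (-α - 1))
  · rw [if_neg hx.not_gt, if_pos hx, abs_of_neg hx]
    exact mul_le_mul_of_nonneg_right (mul_le_of_le_one_left hα (by linarith))
      (Real.rpow_nonneg (neg_nonneg.2 hx.le) _)

lemma nuAlpha_abs_ge_lt_top {α β : ℝ} (hα : 0 < α) (hβ₀ : 0 ≤ β) (hβ₁ : β ≤ 1) {c : ℝ}
    (hc : 0 < c) : nuAlpha α β {x | c ≤ |x|} < ∞ := by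
  have hint : Integrable fun x : ℝ => α * ((1 + c) / c) ^ (α + 1) * (1 + ‖x‖) ^ (-(α + 1)) :=
    (integrable_one_add_norm (by simp; linarith)).const_mul _
  calc nuAlpha α β {x | c ≤ |x|}
      ≤ ∫⁻ x in {x | c ≤ |x|}, ENNReal.ofReal (α * |x| ^ (-α - 1)) :=
        (nuAlpha_le_withDensity hα.le hβ₀ hβ₁ _).trans_eq (withDensity_apply' _ _)
    _ ≤ ∫⁻ x in {x | c ≤ |x|},
          ENNReal.ofReal (α * ((1 + c) / c) ^ (α + 1) * (1 + ‖x‖) ^ (-(α + 1))) := by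
        refine setLIntegral_mono' (measurableSet_le measurable_const measurable_abs)
          fun x hx => ENNReal.ofReal_le_ofReal ?_
        rw [mul_assoc, Real.norm_eq_abs, show -α - 1 = -(α + 1) by ring]
        exact mul_le_mul_of_nonneg_left
          (rpow_neg_le_mul_one_add_rpow_neg hc hx (by linarith)) hα.le
    _ ≤ ∫⁻ x, ENNReal.ofReal (α * ((1 + c) / c) ^ (α + 1) * (1 + ‖x‖) ^ (-(α + 1))) :=
        setLIntegral_le_lintegral _ _
    _ < ∞ := hint.lintegral_lt_top

lemma tendsto_measure_abs_ge_atTop {ν : Measure ℝ} {c₀ : ℝ} (h : ν {x | c₀ ≤ |x|} ≠ ∞) :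
    Tendsto (fun c => ν {x | c ≤ |x|}) atTop (𝓝 0) := by
  have hempty : ⋂ c : ℝ, {x : ℝ | c ≤ |x|} = ∅ :=
    iInter_eq_empty_iff.2 fun x => ⟨|x| + 1, by simp⟩
  simpa [hempty, Function.comp_def] using tendsto_measure_iInter_atTop
    (fun c => (measurableSet_le measurable_const measurable_abs).nullMeasurableSet)
    (fun c d hcd x (hx : d ≤ |x|) => hcd.trans hx) ⟨c₀, h⟩

lemma integrable_of_abs_le_of_eq_zero {ν : Measure ℝ} {g : ℝ → ℝ} (hg : AEStronglyMeasurable g ν)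
    {C δ : ℝ} (hC : ∀ x, |g x| ≤ C) (hδ : ∀ x, |x| < δ → g x = 0)
    (hν : ν {x | δ ≤ |x|} ≠ ∞) : Integrable g ν :=
  (Measure.integrableOn_of_bounded hν hg (ae_of_all _ hC)).integrable_of_forall_notMem_eq_zero
    fun x hx => hδ x (not_le.1 hx)

section AxisApproximation

lemma exists_finset_forall_abs_lt_mem {U : Set (ℕ → ℝ)} (hU : U ∈ 𝓝 0) :
    ∃ T : Finset ℕ, ∃ δ > 0, ∀ y : ℕ → ℝ, (∀ j ∈ T, |y j| < δ) → y ∈ U := by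
  rw [nhds_pi, Filter.mem_pi'] at hU
  obtain ⟨T, t, ht, hTU⟩ := hU
  have hsmall : ∀ j ∈ T, ∀ᶠ δ in 𝓝[>] (0:ℝ), Metric.ball 0 δ ⊆ t j := fun j _ => by
    obtain ⟨ε, hε, hεt⟩ := Metric.mem_nhds_iff.1 (ht j)
    filter_upwards [Ioo_mem_nhdsGT hε] with δ hδ
    exact (Metric.ball_subset_ball hδ.2.le).trans hεt
  obtain ⟨δ, hδT, hδ⟩ :=
    (((eventually_all_finset T).2 hsmall).and eventually_mem_nhdsWithin).exists
  exact ⟨T, δ, hδ, fun y hy => hTU fun j hj => hδT j hj (by simpa using hy j hj)⟩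

/-- Uniform continuity of `F` near the compact pieces `{x eᵢ : |x| ≤ M}` of the axes. -/
lemma exists_finset_abs_sub_apply_update_lt {F : (ℕ → ℝ) → ℝ} (hF : Continuous F)
    (s : Finset ℕ) (M : ℝ) {θ : ℝ} (hθ : 0 < θ) :
    ∃ T : Finset ℕ, ∃ η > 0, ∀ i ∈ s, ∀ y : ℕ → ℝ, |y i| ≤ M →
      (∀ j ∈ T, j ≠ i → |y j| < η) → |F y - F (update 0 i (y i))| < θ := by
  set K := ⋃ i ∈ s, update (0 : ℕ → ℝ) i '' Metric.closedBall 0 M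
  have hK : IsCompact K := s.isCompact_biUnion fun i _ =>
    (isCompact_closedBall 0 M).image (continuous_const.update i continuous_id)
  have hunif := hK.uniformContinuousAt_of_continuousAt F (fun a _ => hF.continuousAt)
    (Metric.dist_mem_uniformity hθ)
  rw [uniformity_eq_comap_nhds_zero] at hunif
  obtain ⟨V, hV, hVsub⟩ := Filter.mem_comap.1 hunif
  obtain ⟨T, η, hη, hTV⟩ := exists_finset_forall_abs_lt_mem hV
  refine ⟨T, η, hη, fun i hi y hyM hyT => ?_⟩
  have hmem : (update (0 : ℕ → ℝ) i (y i), y) ∈ {p : (ℕ → ℝ) × (ℕ → ℝ) | p.1 ∈ K →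
      dist (F p.1) (F p.2) < θ} := by
    refine hVsub (hTV _ fun j hj => ?_)
    rcases eq_or_ne j i with rfl | hji
    · simpa using hη
    · simpa [hji] using hyT j hj hji
  rw [abs_sub_comm]
  exact hmem (mem_biUnion hi ⟨y i, by simpa using hyM, rfl⟩)

def coordTail (c : ℝ) (i : ℕ) : Set (ℕ → ℝ) := {y | c ≤ |y i|}

lemma measurableSet_coordTail (c : ℝ) (i : ℕ) : MeasurableSet (coordTail c i) :=
  measurableSet_le measurable_const (measurable_pi_apply i).abs

lemma one_le_indicator_coordTail_add_sum_indicator {y : ℕ → ℝ} {i : ℕ} {δ η M : ℝ}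
    {T : Finset ℕ} (hyi : δ ≤ |y i|) (hfar : ¬(|y i| ≤ M ∧ ∀ j ∈ T, j ≠ i → |y j| < η)) :
    (1 : ℝ) ≤ (coordTail M i).indicator 1 y +
      ∑ j ∈ T.erase i, (coordTail δ i ∩ coordTail η j).indicator 1 y := by
  have hind (S : Set (ℕ → ℝ)) : 0 ≤ S.indicator (1 : (ℕ → ℝ) → ℝ) y :=
    indicator_nonneg (fun _ _ => zero_le_one) _
  rw [not_and_or] at hfar
  push Not at hfar
  rcases hfar with hM | ⟨j, hj, hji, hjη⟩
  · rw [indicator_of_mem (show y ∈ coordTail M i from hM.le), Pi.one_apply]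
    exact le_add_of_nonneg_right (Finset.sum_nonneg fun j _ => hind _)
  · refine le_add_of_nonneg_of_le (hind _) ?_
    calc (1 : ℝ) = (coordTail δ i ∩ coordTail η j).indicator 1 y := by
          rw [indicator_of_mem (show y ∈ coordTail δ i ∩ coordTail η j from ⟨hyi, hjη⟩),
            Pi.one_apply]
      _ ≤ _ := Finset.single_le_sum (f := fun j =>
            (coordTail δ i ∩ coordTail η j).indicator (1 : (ℕ → ℝ) → ℝ) y)
          (fun k _ => hind _) (Finset.mem_erase.2 ⟨hji, hj⟩)

variable {F : (ℕ → ℝ) → ℝ} {s : Finset ℕ} {δ : ℝ}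

lemma apply_update_zero_eq_zero (hδ : 0 < δ) (hsupp : ∀ y, (∀ j ∈ s, |y j| < δ) → F y = 0)
    {i : ℕ} {x : ℝ} (h : i ∉ s ∨ |x| < δ) : F (update 0 i x) = 0 := by
  refine hsupp _ fun j hj => ?_
  rcases eq_or_ne j i with rfl | hji
  · simpa [hj] using h
  · simpa [hji] using hδ

lemma abs_sub_sum_apply_update_le_mul {C : ℝ} (hC : ∀ y, |F y| ≤ C) (s : Finset ℕ)
    (y : ℕ → ℝ) : |F y - ∑ i ∈ s, F (update 0 i (y i))| ≤ (s.card + 1) * C :=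
  calc |F y - ∑ i ∈ s, F (update 0 i (y i))|
      ≤ |F y| + ∑ i ∈ s, |F (update 0 i (y i))| :=
        (abs_sub _ _).trans (by gcongr; exact Finset.abs_sum_le_sum_abs _ _)
    _ ≤ C + ∑ _i ∈ s, C := add_le_add (hC y) (Finset.sum_le_sum fun i _ => hC _)
    _ = (s.card + 1) * C := by simp; ring

lemma abs_sub_sum_apply_update_le {C η M θ : ℝ} {T : Finset ℕ} (hδ : 0 < δ)
    (hC : ∀ y, |F y| ≤ C) (hsupp : ∀ y, (∀ j ∈ s, |y j| < δ) → F y = 0) (hsT : s ⊆ T)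
    (hηδ : η ≤ δ) (hθ : 0 ≤ θ)
    (htube : ∀ i ∈ s, ∀ y : ℕ → ℝ, |y i| ≤ M → (∀ j ∈ T, j ≠ i → |y j| < η) →
      |F y - F (update 0 i (y i))| ≤ θ) (y : ℕ → ℝ) :
    |F y - ∑ i ∈ s, F (update 0 i (y i))| ≤ ∑ i ∈ s, (θ * (coordTail δ i).indicator 1 y +
      (s.card + 1) * C * ((coordTail M i).indicator 1 y +
        ∑ j ∈ T.erase i, (coordTail δ i ∩ coordTail η j).indicator 1 y)) := by
  have hC' : 0 ≤ (s.card + 1) * C := by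
    have := (abs_nonneg _).trans (hC 0); positivity
  have hind (S : Set (ℕ → ℝ)) : 0 ≤ S.indicator (1 : (ℕ → ℝ) → ℝ) y :=
    indicator_nonneg (fun _ _ => zero_le_one) _
  have hterm : ∀ i, 0 ≤ θ * (coordTail δ i).indicator 1 y +
      (s.card + 1) * C * ((coordTail M i).indicator 1 y +
        ∑ j ∈ T.erase i, (coordTail δ i ∩ coordTail η j).indicator 1 y) := fun i =>
    add_nonneg (mul_nonneg hθ (hind _))
      (mul_nonneg hC' (add_nonneg (hind _) (Finset.sum_nonneg fun j _ => hind _)))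
  by_cases hbig : ∃ i ∈ s, δ ≤ |y i|
  swap
  · push Not at hbig
    rw [hsupp y hbig, Finset.sum_eq_zero fun i hi =>
      apply_update_zero_eq_zero hδ hsupp (.inr (hbig i hi))]
    simpa using Finset.sum_nonneg fun i _ => hterm i
  obtain ⟨i, hi, hyi⟩ := hbig
  refine le_trans ?_ (Finset.single_le_sum (fun k _ => hterm k) hi)
  by_cases hgood : |y i| ≤ M ∧ ∀ j ∈ T, j ≠ i → |y j| < η
  · have hsum : ∑ k ∈ s, F (update 0 k (y k)) = F (update 0 i (y i)) :=
      Finset.sum_eq_single i (fun k hk hki => apply_update_zero_eq_zero hδ hsupp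
        (.inr ((hgood.2 k (hsT hk) hki).trans_le hηδ))) (absurd hi)
    rw [hsum, indicator_of_mem (show y ∈ coordTail δ i from hyi)]
    refine (htube i hi y hgood.1 hgood.2).trans ?_
    simp only [Pi.one_apply, mul_one, le_add_iff_nonneg_right]
    exact mul_nonneg hC' (add_nonneg (hind _) (Finset.sum_nonneg fun j _ => hind _))
  · calc |F y - ∑ k ∈ s, F (update 0 k (y k))| ≤ (s.card + 1) * C :=
          abs_sub_sum_apply_update_le_mul hC s y
      _ ≤ (s.card + 1) * C * ((coordTail M i).indicator 1 y +
            ∑ j ∈ T.erase i, (coordTail δ i ∩ coordTail η j).indicator 1 y) :=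
          le_mul_of_one_le_right hC' (one_le_indicator_coordTail_add_sum_indicator hyi hgood)
      _ ≤ _ := le_add_of_nonneg_left (mul_nonneg hθ (hind _))

lemma abs_integral_sub_sum_integral_apply_update_le {μ : Measure (ℕ → ℝ)} [IsFiniteMeasure μ]
    {C η M θ : ℝ} {T : Finset ℕ} (hF : Continuous F) (hδ : 0 < δ) (hC : ∀ y, |F y| ≤ C)
    (hsupp : ∀ y, (∀ j ∈ s, |y j| < δ) → F y = 0) (hsT : s ⊆ T) (hηδ : η ≤ δ) (hθ : 0 ≤ θ)
    (htube : ∀ i ∈ s, ∀ y : ℕ → ℝ, |y i| ≤ M → (∀ j ∈ T, j ≠ i → |y j| < η) →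
      |F y - F (update 0 i (y i))| ≤ θ) :
    |∫ y, F y ∂μ - ∑ i ∈ s, ∫ y, F (update 0 i (y i)) ∂μ| ≤ ∑ i ∈ s, (θ * μ.real (coordTail δ i) +
      (s.card + 1) * C * (μ.real (coordTail M i) +
        ∑ j ∈ T.erase i, μ.real (coordTail δ i ∩ coordTail η j))) := by
  have hbdd {G : (ℕ → ℝ) → ℝ} (hG : Continuous G) (hGC : ∀ y, |G y| ≤ C) : Integrable G μ :=
    .of_bound hG.aestronglyMeasurable C (ae_of_all _ hGC)
  have hupd (i : ℕ) : Integrable (fun y : ℕ → ℝ => F (update 0 i (y i))) μ :=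
    hbdd (hF.comp (continuous_const.update i (continuous_apply i))) fun y => hC _
  have hind {S : Set (ℕ → ℝ)} (hS : MeasurableSet S) : Integrable (S.indicator 1) μ :=
    (integrable_const (1 : ℝ)).indicator hS
  have hpairs (i : ℕ) : Integrable (fun y => ∑ j ∈ T.erase i,
      (coordTail δ i ∩ coordTail η j).indicator 1 y) μ := integrable_finsetSum _ fun j _ =>
    hind ((measurableSet_coordTail δ i).inter (measurableSet_coordTail η j))
  have hfar (i : ℕ) : Integrable (fun y => (coordTail M i).indicator 1 y +
      ∑ j ∈ T.erase i, (coordTail δ i ∩ coordTail η j).indicator 1 y) μ :=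
    (hind (measurableSet_coordTail M i)).fun_add (hpairs i)
  have hterm (i : ℕ) : Integrable (fun y => θ * (coordTail δ i).indicator 1 y +
      (s.card + 1) * C * ((coordTail M i).indicator 1 y +
        ∑ j ∈ T.erase i, (coordTail δ i ∩ coordTail η j).indicator 1 y)) μ :=
    ((hind (measurableSet_coordTail δ i)).const_mul θ).fun_add ((hfar i).const_mul _)
  rw [← integral_finsetSum s fun i _ => hupd i,
    ← integral_sub (hbdd hF hC) (integrable_finsetSum s fun i _ => hupd i)]
  refine abs_integral_le_integral_abs.trans <| (integral_mono ((hbdd hF hC).sub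
    (integrable_finsetSum s fun i _ => hupd i)).abs (integrable_finsetSum s fun i _ => hterm i)
    (abs_sub_sum_apply_update_le hδ hC hsupp hsT hηδ hθ htube)).trans_eq ?_
  rw [integral_finsetSum s fun i _ => hterm i]
  refine Finset.sum_congr rfl fun i _ => ?_
  rw [integral_add ((hind (measurableSet_coordTail δ i)).const_mul θ) ((hfar i).const_mul _),
    integral_const_mul, integral_const_mul,
    integral_add (hind (measurableSet_coordTail M i)) (hpairs i),
    integral_finsetSum _ fun j _ =>
      hind ((measurableSet_coordTail δ i).inter (measurableSet_coordTail η j)),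
    integral_indicator_one (measurableSet_coordTail δ i),
    integral_indicator_one (measurableSet_coordTail M i)]
  simp_rw [integral_indicator_one
    ((measurableSet_coordTail δ i).inter (measurableSet_coordTail _ _))]

end AxisApproximation

lemma tendsto_zero_of_forall_abs_le_mul_add {ι : Type*} {l : Filter ι} {x : ι → ℝ} (K : ℝ)
    (h : ∀ θ > 0, ∃ e : ι → ℝ, Tendsto e l (𝓝 0) ∧ ∀ᶠ n in l, |x n| ≤ K * θ + e n) :
    Tendsto x l (𝓝 0) := by
  rw [Metric.tendsto_nhds]
  intro ε hε
  obtain ⟨e, he, hxe⟩ := h (ε / (2 * (|K| + 1))) (by positivity)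
  filter_upwards [hxe, Metric.tendsto_nhds.1 he (ε / 2) (half_pos hε)] with n hn hen
  rw [Real.dist_eq, sub_zero] at hen ⊢
  have hK : K * (ε / (2 * (|K| + 1))) ≤ ε / 2 :=
    calc K * (ε / (2 * (|K| + 1))) ≤ (|K| + 1) * (ε / (2 * (|K| + 1))) := by
          gcongr; linarith [le_abs_self K]
      _ = ε / 2 := by field_simp
  linarith [le_abs_self (e n)]

lemma tendsto_mul_mul_of_eventually_mul_le {ι : Type*} {l : Filter ι} {w p q : ι → ℝ} {A B : ℝ}
    (hw : Tendsto w l atTop) (hp : ∀ n, 0 ≤ p n) (hq : ∀ n, 0 ≤ q n)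
    (hpA : ∀ᶠ n in l, w n * p n ≤ A) (hqB : ∀ᶠ n in l, w n * q n ≤ B) :
    Tendsto (fun n => w n * (p n * q n)) l (𝓝 0) := by
  refine squeeze_zero' ?_ ?_ (tendsto_const_nhds.div_atTop hw : Tendsto (fun n => A * B / w n) l _)
  · filter_upwards [hw.eventually_ge_atTop 0] with n hn
    exact mul_nonneg hn (mul_nonneg (hp n) (hq n))
  · filter_upwards [hw.eventually_gt_atTop 0, hpA, hqB] with n hn hnA hnB
    rw [le_div_iff₀ hn]
    calc w n * (p n * q n) * w n = (w n * p n) * (w n * q n) := by ring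
      _ ≤ A * B := mul_le_mul hnA hnB (mul_nonneg hn.le (hq n))
          ((mul_nonneg hn.le (hp n)).trans hnA)

/-- Conditions under which the mass of `w n • μ n` away from `0` asymptotically concentrates on
the coordinate axes. -/
structure AxisTailConditions (w : ℕ → ℝ) (μ : ℕ → Measure (ℕ → ℝ)) : Prop where
  bdd : ∀ c > 0, ∀ i, ∃ A, ∀ᶠ n in atTop, w n * (μ n).real (coordTail c i) ≤ A
  far : ∀ θ > 0, ∀ i, ∀ᶠ M in atTop, ∀ᶠ n in atTop, w n * (μ n).real (coordTail M i) ≤ θ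
  pair : ∀ c > 0, ∀ d > 0, ∀ i j, i ≠ j →
    Tendsto (fun n => w n * (μ n).real (coordTail c i ∩ coordTail d j)) atTop (𝓝 0)

theorem AxisTailConditions.tendsto_mul_integral_sub_sum {w : ℕ → ℝ} {μ : ℕ → Measure (ℕ → ℝ)}
    [∀ n, IsFiniteMeasure (μ n)] (h : AxisTailConditions w μ) (hw : ∀ n, 0 ≤ w n)
    {F : (ℕ → ℝ) → ℝ} (hF : Continuous F) {C : ℝ} (hC : ∀ y, |F y| ≤ C) {s : Finset ℕ} {δ : ℝ}
    (hδ : 0 < δ) (hsupp : ∀ y, (∀ j ∈ s, |y j| < δ) → F y = 0) :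
    Tendsto (fun n => w n * (∫ y, F y ∂μ n - ∑ i ∈ s, ∫ y, F (update 0 i (y i)) ∂μ n))
      atTop (𝓝 0) := by
  choose A hA using fun i => h.bdd δ hδ i
  set C' : ℝ := (s.card + 1) * C with hC'def
  have hC' : 0 ≤ C' := by
    have := (abs_nonneg _).trans (hC 0); positivity
  refine tendsto_zero_of_forall_abs_le_mul_add (∑ i ∈ s, (A i + C')) fun θ hθ => ?_
  obtain ⟨M, hM⟩ := ((eventually_all_finset s).2 fun i _ => h.far θ hθ i).exists
  obtain ⟨T₀, η₀, hη₀, htube⟩ := exists_finset_abs_sub_apply_update_lt hF s M hθ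
  set T := T₀ ∪ s
  set η := min η₀ δ
  refine ⟨fun n => ∑ i ∈ s, C' * (w n * ∑ j ∈ T.erase i,
    (μ n).real (coordTail δ i ∩ coordTail η j)), ?_, ?_⟩
  · simpa [Finset.mul_sum] using tendsto_finsetSum s fun i _ => (tendsto_finsetSum _ fun j hj =>
      h.pair δ hδ η (lt_min hη₀ hδ) i j (Finset.ne_of_mem_erase hj).symm).const_mul C'
  filter_upwards [(eventually_all_finset s).2 fun i _ => hA i, (eventually_all_finset s).2 hM]
    with n hAn hMn
  have hest := abs_integral_sub_sum_integral_apply_update_le (μ := μ n) hF hδ hC hsupp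
    Finset.subset_union_right (min_le_right _ _) hθ.le fun i hi y hyM hyT =>
      (htube i hi y hyM fun j hj hji =>
        (hyT j (Finset.mem_union_left _ hj) hji).trans_le (min_le_left _ _)).le
  rw [← hC'def] at hest
  have hsplit : ∑ i ∈ s, (θ * A i + C' * θ + C' * (w n * ∑ j ∈ T.erase i,
      (μ n).real (coordTail δ i ∩ coordTail η j))) = (∑ i ∈ s, (A i + C')) * θ +
      ∑ i ∈ s, C' * (w n * ∑ j ∈ T.erase i, (μ n).real (coordTail δ i ∩ coordTail η j)) := by
    rw [Finset.sum_mul, ← Finset.sum_add_distrib]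
    exact Finset.sum_congr rfl fun i _ => by ring
  rw [abs_mul, abs_of_nonneg (hw n), ← hsplit]
  refine (mul_le_mul_of_nonneg_left hest (hw n)).trans ?_
  rw [Finset.mul_sum]
  exact Finset.sum_le_sum fun i hi => by
    nlinarith [mul_le_mul_of_nonneg_left (hAn i hi) hθ.le, mul_le_mul_of_nonneg_left (hMn i hi) hC']

section Marginal

variable {Ω : Type*} [MeasurableSpace Ω]

def HasVagueLimitAwayFromZero (P : Measure Ω) (w : ℕ → ℝ) (Y : ℕ → Ω → ℝ) (ν : Measure ℝ) :
    Prop :=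
  ∀ f : ℝ → ℝ, Continuous f → (∃ C, ∀ x, |f x| ≤ C) → (∃ δ > (0:ℝ), ∀ x, |x| < δ → f x = 0) →
    Tendsto (fun n => w n * ∫ ω, f (Y n ω) ∂P) atTop (𝓝 (∫ x, f x ∂ν))

namespace HasVagueLimitAwayFromZero

variable {P : Measure Ω} [IsFiniteMeasure P] {w : ℕ → ℝ} {Y : ℕ → Ω → ℝ} {ν : Measure ℝ}

lemma eventually_mul_measureReal_le (h : HasVagueLimitAwayFromZero P w Y ν) (hw : ∀ n, 0 ≤ w n)
    (hY : ∀ n, Measurable (Y n)) {c d θ : ℝ} (hc : 0 < c) (hcd : c < d) (hθ : 0 < θ)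
    (hν : ν {x | c ≤ |x|} ≠ ∞) :
    ∀ᶠ n in atTop, w n * P.real {ω | d ≤ |Y n ω|} ≤ ν.real {x | c ≤ |x|} + θ := by
  have hcset : MeasurableSet {x : ℝ | c ≤ |x|} := measurableSet_le measurable_const measurable_abs
  obtain ⟨f, hf0, hf1, hf01⟩ := exists_continuous_zero_one_of_isClosed
    (isClosed_le continuous_abs continuous_const : IsClosed {x : ℝ | |x| ≤ c})
    (isClosed_le continuous_const continuous_abs : IsClosed {x : ℝ | d ≤ |x|})
    (disjoint_left.2 fun x (hxc : |x| ≤ c) (hxd : d ≤ |x|) => by linarith)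
  have hlim := h f f.continuous ⟨1, fun x => abs_le.2 ⟨by linarith [(hf01 x).1], (hf01 x).2⟩⟩
    ⟨c, hc, fun x hx => hf0 (le_of_lt (a := |x|) hx)⟩
  have hfν : ∫ x, f x ∂ν ≤ ν.real {x | c ≤ |x|} := by
    rw [← integral_indicator_one hcset]
    refine integral_mono_of_nonneg (ae_of_all _ fun x => (hf01 x).1)
      ((integrable_indicator_iff hcset).2 (integrableOn_const hν)) (ae_of_all _ fun x => ?_)
    by_cases hx : c ≤ |x|
    · simpa [indicator_of_mem (show x ∈ {x : ℝ | c ≤ |x|} from hx)] using (hf01 x).2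
    · simp [indicator_of_notMem (show x ∉ {x : ℝ | c ≤ |x|} from hx), hf0 (not_le.1 hx).le]
  filter_upwards [hlim.eventually (eventually_le_nhds (lt_add_of_pos_right _ hθ))] with n hn
  have hdset : MeasurableSet {ω | d ≤ |Y n ω|} := measurableSet_le measurable_const (hY n).abs
  have hPf : P.real {ω | d ≤ |Y n ω|} ≤ ∫ ω, f (Y n ω) ∂P := by
    rw [← integral_indicator_one hdset]
    refine integral_mono ((integrable_const (1 : ℝ)).indicator hdset)
      (.of_bound (f.continuous.measurable.comp (hY n)).aestronglyMeasurable 1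
        (ae_of_all _ fun ω => by simpa [abs_le] using ⟨by linarith [(hf01 (Y n ω)).1],
          (hf01 (Y n ω)).2⟩)) fun ω => ?_
    by_cases hω : d ≤ |Y n ω|
    · simp [indicator_of_mem (show ω ∈ {ω | d ≤ |Y n ω|} from hω), hf1 (show Y n ω ∈ _ from hω)]
    · simpa [indicator_of_notMem (show ω ∉ {ω | d ≤ |Y n ω|} from hω)] using (hf01 (Y n ω)).1
  calc w n * P.real {ω | d ≤ |Y n ω|} ≤ w n * ∫ ω, f (Y n ω) ∂P :=
        mul_le_mul_of_nonneg_left hPf (hw n)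
    _ ≤ ∫ x, f x ∂ν + θ := hn
    _ ≤ ν.real {x | c ≤ |x|} + θ := by linarith

lemma exists_eventually_mul_measureReal_le (h : HasVagueLimitAwayFromZero P w Y ν)
    (hw : ∀ n, 0 ≤ w n) (hY : ∀ n, Measurable (Y n)) (hν : ∀ c > 0, ν {x | c ≤ |x|} ≠ ∞)
    {d : ℝ} (hd : 0 < d) : ∃ A, ∀ᶠ n in atTop, w n * P.real {ω | d ≤ |Y n ω|} ≤ A :=
  ⟨_, h.eventually_mul_measureReal_le hw hY (half_pos hd) (half_lt_self hd) one_pos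
    (hν _ (half_pos hd))⟩

lemma eventually_eventually_mul_measureReal_le (h : HasVagueLimitAwayFromZero P w Y ν)
    (hw : ∀ n, 0 ≤ w n) (hY : ∀ n, Measurable (Y n)) (hν : ∀ c > 0, ν {x | c ≤ |x|} ≠ ∞)
    {θ : ℝ} (hθ : 0 < θ) :
    ∀ᶠ M in atTop, ∀ᶠ n in atTop, w n * P.real {ω | M ≤ |Y n ω|} ≤ θ := by
  have hsmall : ∀ᶠ M in atTop, ν {x | M / 2 ≤ |x|} < ENNReal.ofReal (θ / 2) :=
    ((tendsto_measure_abs_ge_atTop (hν 1 one_pos)).comp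
      (tendsto_id.atTop_div_const two_pos)).eventually (gt_mem_nhds (by positivity))
  filter_upwards [hsmall, eventually_gt_atTop 0] with M hM hM0
  filter_upwards [h.eventually_mul_measureReal_le hw hY (half_pos hM0) (half_lt_self hM0)
    (half_pos hθ) (hν _ (half_pos hM0))] with n hn
  have : ν.real {x | M / 2 ≤ |x|} ≤ θ / 2 :=
    ENNReal.toReal_le_of_le_ofReal (by positivity) hM.le
  linarith

end HasVagueLimitAwayFromZero

end Marginal

section IID

variable {Ω : Type*} [MeasurableSpace Ω] {P : Measure Ω} {X : ℕ → Ω → ℝ}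

lemma measurable_const_mul_pi (hX : ∀ i, Measurable (X i)) (a : ℝ) :
    Measurable fun ω k => a * X k ω :=
  measurable_pi_lambda _ fun k => (hX k).const_mul a

lemma measureReal_map_coordTail (hX : ∀ i, Measurable (X i))
    (hident : ∀ i, IdentDistrib (X i) (X 0) P P) (a c : ℝ) (i : ℕ) :
    (P.map fun ω k => a * X k ω).real (coordTail c i) = P.real {ω | c ≤ |a * X 0 ω|} := by
  rw [map_measureReal_apply (measurable_const_mul_pi hX a) (measurableSet_coordTail c i),
    measureReal_def, measureReal_def]
  exact congrArg ENNReal.toReal ((hident i).measure_mem_eq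
    (measurableSet_le measurable_const (measurable_id.const_mul a).abs))

lemma measureReal_map_coordTail_inter (hX : ∀ i, Measurable (X i)) (hindep : iIndepFun X P)
    (hident : ∀ i, IdentDistrib (X i) (X 0) P P) (a c d : ℝ) {i j : ℕ} (hij : i ≠ j) :
    (P.map fun ω k => a * X k ω).real (coordTail c i ∩ coordTail d j) =
      P.real {ω | c ≤ |a * X 0 ω|} * P.real {ω | d ≤ |a * X 0 ω|} := by
  rw [← measureReal_map_coordTail hX hident a c i, ← measureReal_map_coordTail hX hident a d j]
  simp only [map_measureReal_apply (measurable_const_mul_pi hX a) (measurableSet_coordTail _ _),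
    map_measureReal_apply (measurable_const_mul_pi hX a)
      ((measurableSet_coordTail c i).inter (measurableSet_coordTail d j)), measureReal_def,
    preimage_inter]
  rw [← ENNReal.toReal_mul]
  exact congrArg ENNReal.toReal ((hindep.indepFun hij).measure_inter_preimage_eq_mul _ _
    (measurableSet_le measurable_const (measurable_id.const_mul a).abs)
    (measurableSet_le measurable_const (measurable_id.const_mul a).abs))

lemma integral_map_apply_coord (hX : ∀ i, Measurable (X i))
    (hident : ∀ i, IdentDistrib (X i) (X 0) P P) (a : ℝ) {g : ℝ → ℝ} (hg : Continuous g)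
    (i : ℕ) : ∫ y, g (y i) ∂(P.map fun ω k => a * X k ω) = ∫ ω, g (a * X 0 ω) ∂P := by
  rw [integral_map (measurable_const_mul_pi hX a).aemeasurable
    (by fun_prop : Continuous fun y : ℕ → ℝ => g (y i)).aestronglyMeasurable]
  exact ((hident i).comp (hg.measurable.comp (measurable_id.const_mul a))).integral_eq

theorem AxisTailConditions.of_iid [IsFiniteMeasure P] (hX : ∀ i, Measurable (X i))
    (hindep : iIndepFun X P) (hident : ∀ i, IdentDistrib (X i) (X 0) P P) {a w : ℕ → ℝ}
    {ν : Measure ℝ} (hw : Tendsto w atTop atTop) (hw0 : ∀ n, 0 ≤ w n)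
    (hν : ∀ c > 0, ν {x | c ≤ |x|} ≠ ∞)
    (hlim : HasVagueLimitAwayFromZero P w (fun n ω => a n * X 0 ω) ν) :
    AxisTailConditions w fun n => P.map fun ω k => a n * X k ω := by
  have hY : ∀ n, Measurable fun ω => a n * X 0 ω := fun n => (hX 0).const_mul _
  refine ⟨fun c hc i => ?_, fun θ hθ i => ?_, fun c hc d hd i j hij => ?_⟩
  · simpa only [measureReal_map_coordTail hX hident] using
      hlim.exists_eventually_mul_measureReal_le hw0 hY hν hc
  · simpa only [measureReal_map_coordTail hX hident] using
      hlim.eventually_eventually_mul_measureReal_le hw0 hY hν hθ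
  · obtain ⟨A, hA⟩ := hlim.exists_eventually_mul_measureReal_le hw0 hY hν hc
    obtain ⟨B, hB⟩ := hlim.exists_eventually_mul_measureReal_le hw0 hY hν hd
    simpa only [measureReal_map_coordTail_inter hX hindep hident _ _ _ hij] using
      tendsto_mul_mul_of_eventually_mul_le hw (fun n => measureReal_nonneg)
        (fun n => measureReal_nonneg) hA hB

lemma HasVagueLimitAwayFromZero.tendsto_mul_integral_apply_update (hX : ∀ i, Measurable (X i))
    (hident : ∀ i, IdentDistrib (X i) (X 0) P P) {a w : ℕ → ℝ} {ν : Measure ℝ}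
    (hlim : HasVagueLimitAwayFromZero P w (fun n ω => a n * X 0 ω) ν) {F : (ℕ → ℝ) → ℝ}
    (hF : Continuous F) {C : ℝ} (hC : ∀ y, |F y| ≤ C) {s : Finset ℕ} {δ : ℝ} (hδ : 0 < δ)
    (hsupp : ∀ y, (∀ j ∈ s, |y j| < δ) → F y = 0) (i : ℕ) :
    Tendsto (fun n => w n * ∫ y, F (update 0 i (y i)) ∂(P.map fun ω k => a n * X k ω)) atTop
      (𝓝 (∫ x, F (update 0 i x) ∂ν)) := by
  have hFi : Continuous fun x : ℝ => F (update 0 i x) :=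
    hF.comp (continuous_const.update i continuous_id)
  refine (hlim _ hFi ⟨C, fun x => hC _⟩ ⟨δ, hδ, fun x hx =>
    apply_update_zero_eq_zero hδ hsupp (.inr hx)⟩).congr fun n => ?_
  exact congrArg _ (integral_map_apply_coord hX hident _ hFi i).symm

end IID

lemma integral_sum_map_update_eq_sum {ν : Measure ℝ} {F : (ℕ → ℝ) → ℝ} (hF : Measurable F)
    {C δ : ℝ} {s : Finset ℕ} (hδ : 0 < δ) (hC : ∀ y, |F y| ≤ C)
    (hsupp : ∀ y, (∀ j ∈ s, |y j| < δ) → F y = 0) (hν : ν {x | δ ≤ |x|} ≠ ∞) :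
    ∫ y, F y ∂(Measure.sum fun i : ℕ => Measure.map (fun x : ℝ => update (0 : ℕ → ℝ) i x) ν) =
      ∑ i ∈ s, ∫ x, F (update 0 i x) ∂ν := by
  have hmap {G : (ℕ → ℝ) → ℝ} (hG : Measurable G) (i : ℕ) :
      ∫ y, G y ∂(ν.map fun x => update (0 : ℕ → ℝ) i x) = ∫ x, G (update 0 i x) ∂ν :=
    integral_map (measurable_update 0).aemeasurable hG.aestronglyMeasurable
  have hzero (i : ℕ) (hi : i ∉ s) (x : ℝ) : F (update 0 i x) = 0 :=
    apply_update_zero_eq_zero hδ hsupp (.inl hi)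
  have hint (i : ℕ) : Integrable (fun x => F (update 0 i x)) ν :=
    integrable_of_abs_le_of_eq_zero (hF.comp (measurable_update 0)).aestronglyMeasurable
      (fun x => hC _) (fun x hx => apply_update_zero_eq_zero hδ hsupp (.inr hx)) hν
  have hsum : Integrable F (Measure.sum fun i : ℕ => ν.map fun x => update (0 : ℕ → ℝ) i x) :=
    integrable_sum_measure_iff.2 ⟨fun i => (integrable_map_measure hF.aestronglyMeasurable
      (measurable_update 0).aemeasurable).2 (hint i), summable_of_ne_finset_zero (s := s)
      fun i hi => by rw [hmap hF.norm i]; simp [hzero i hi]⟩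
  rw [integral_sum_measure hsum, tsum_eq_sum fun i hi => by simp [hmap hF i, hzero i hi]]
  exact Finset.sum_congr rfl fun i _ => hmap hF i

theorem stmt10_general {Ω : Type*} [MeasurableSpace Ω] (P : Measure Ω) [IsProbabilityMeasure P]
    (X : ℕ → Ω → ℝ) (hXmeas : ∀ i, Measurable (X i))
    (hIndep : iIndepFun X P)
    (hIdent : ∀ i, IdentDistrib (X i) (X 0) P P)
    (ρ α β : ℝ) (hρ : 1 < ρ) (hα : 0 < α) (hβ₀ : 0 ≤ β) (hβ₁ : β ≤ 1)
    (b : ℕ → ℝ)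
    (hmarg : ∀ f : ℝ → ℝ, Continuous f → (∃ C, ∀ x, |f x| ≤ C) →
      (∃ δ > (0:ℝ), ∀ x, |x| < δ → f x = 0) →
      Tendsto (fun n : ℕ => ρ ^ n * ∫ ω, f ((b n)⁻¹ * X 0 ω) ∂P)
        atTop (𝓝 (∫ x, f x ∂(nuAlpha α β)))) :
    ∀ F : (ℕ → ℝ) → ℝ, Continuous F → (∃ C, ∀ y, |F y| ≤ C) →
      (∃ U ∈ 𝓝 (0 : ℕ → ℝ), ∀ y ∈ U, F y = 0) →
      Tendsto (fun n : ℕ => ρ ^ n * ∫ ω, F (fun i => (b n)⁻¹ * X i ω) ∂P)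
        atTop (𝓝 (∫ y, F y ∂(lamIid α β))) := by
  rintro F hF ⟨C, hC⟩ ⟨U, hU, hFU⟩
  obtain ⟨s, δ, hδ, hsU⟩ := exists_finset_forall_abs_lt_mem hU
  have hsupp : ∀ y : ℕ → ℝ, (∀ j ∈ s, |y j| < δ) → F y = 0 := fun y hy => hFU y (hsU y hy)
  have hν : ∀ c > 0, nuAlpha α β {x | c ≤ |x|} ≠ ∞ := fun c hc =>
    (nuAlpha_abs_ge_lt_top hα hβ₀ hβ₁ hc).ne
  have hw0 : ∀ n : ℕ, 0 ≤ ρ ^ n := fun n => by positivity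
  have hlim : HasVagueLimitAwayFromZero P (ρ ^ ·) (fun n ω => (b n)⁻¹ * X 0 ω) (nuAlpha α β) :=
    hmarg
  have hoff := (AxisTailConditions.of_iid hXmeas hIndep hIdent
    (tendsto_pow_atTop_atTop_of_one_lt hρ) hw0 hν hlim).tendsto_mul_integral_sub_sum
    hw0 hF hC hδ hsupp
  have haxis := tendsto_finsetSum s fun i _ =>
    hlim.tendsto_mul_integral_apply_update hXmeas hIdent hF hC hδ hsupp i
  rw [lamIid, integral_sum_map_update_eq_sum hF.measurable hδ hC hsupp (hν δ hδ)]
  have hsum := hoff.add haxis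
  rw [zero_add] at hsum
  refine hsum.congr fun n => ?_
  rw [← Finset.mul_sum, ← mul_add, sub_add_cancel, integral_map
    (measurable_const_mul_pi hXmeas _).aemeasurable hF.aestronglyMeasurable]

/-- for an i.i.d. sequence `X = (X₁, X₂, …)` whose marginal law is
regularly varying, `ρⁿ P(bₙ⁻¹ X₁ ∈ ·) → ν_α` vaguely on `[-∞,∞] \ {0}` (tested
against bounded continuous functions vanishing near `0`), the law of the whole
sequence is regularly varying on `ℝ^ℕ \ {0_∞}` with limit measure `λ_iid`:
`ρⁿ P(bₙ⁻¹ X ∈ ·) → λ_iid` in the Hult–Lindskog sense. -/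
theorem stmt10 {Ω : Type*} [MeasurableSpace Ω] (P : Measure Ω) [IsProbabilityMeasure P]
    (X : ℕ → Ω → ℝ) (hXmeas : ∀ i, Measurable (X i))
    (hIndep : iIndepFun X P)
    (hIdent : ∀ i, IdentDistrib (X i) (X 0) P P)
    (ρ α β : ℝ) (hρ : 1 < ρ) (hα : 0 < α) (hβ₀ : 0 ≤ β) (hβ₁ : β ≤ 1)
    (b : ℕ → ℝ) (hb_pos : ∀ n, 0 < b n) (hb_mono : Monotone b)
    (hmarg : ∀ f : ℝ → ℝ, Continuous f → (∃ C, ∀ x, |f x| ≤ C) →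
      (∃ δ > (0:ℝ), ∀ x, |x| < δ → f x = 0) →
      Tendsto (fun n : ℕ => ρ ^ n * ∫ ω, f ((b n)⁻¹ * X 0 ω) ∂P)
        atTop (𝓝 (∫ x, f x ∂(nuAlpha α β)))) :
    ∀ F : (ℕ → ℝ) → ℝ, Continuous F → (∃ C, ∀ y, |F y| ≤ C) →
      (∃ U ∈ 𝓝 (0 : ℕ → ℝ), ∀ y ∈ U, F y = 0) →
      Tendsto (fun n : ℕ => ρ ^ n * ∫ ω, F (fun i => (b n)⁻¹ * X i ω) ∂P)
        atTop (𝓝 (∫ y, F y ∂(lamIid α β))) :=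
  stmt10_general P X hXmeas hIndep hIdent ρ α β hρ hα hβ₀ hβ₁ b hmarg
end

section
/- Suppose ε : ℝ₊ → ℝ₊ is regularly varying of index -γ (γ > 0), F̄_Q is regularly varying of index -α (α > 0), and for all x > 0, P(|X^{(p)}| > x) ≤ ε(x)·F̄_Q(x). If moreover b_n → ∞ satisfies ρⁿ F̄_Q(b_n) → 1 with ρ > 1, then for every fixed θ > 0, ρⁿ · n^{2+α+γ+η} · P(|X^{(p)}| > b_n θ / n) → 0 as n → ∞, for some (all sufficiently small) η > 0, provided (γ-γ')(1/α - β) log ρ exceeds 0 for suitable γ' ∈ (0,γ), β ∈ (0,1/α) — which always holds. In particular ρⁿ · n · P(n|X^{(p)}| > b_n θ) → 0. -/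
/-!
Since `ε F̄_Q` is regularly varying of index `-(α + γ)`, comparing consecutive dyadic values
gives `ε(x) F̄_Q(x) = O(x^{-σ})` along `x = 2^k` for every `σ < α + γ`; as `F̄_p ≤ ε F̄_Q` is
monotone, this becomes `F̄_p(x) = O(x^{-σ})` for all large `x`. Dually `F̄_Q(x) ≥ c x^{-a}` for
every `a > α`, so `ρⁿ F̄_Q(bₙ) → 1` forces `bₙ ≥ c' ρ^{n/a}`. Choosing `α < a < σ < α + γ`,
`ρⁿ n^E F̄_p(bₙθ/n) ≤ K n^{E+σ} (ρ^{1-σ/a})ⁿ → 0` for every `E`.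
-/

open Filter Topology Real

section GeometricBounds

variable {u : ℕ → ℝ} {L s : ℝ}

lemma exists_eventually_le_mul_pow_of_tendsto_ratio (hu : ∀ k, 0 < u k)
    (h : Tendsto (fun k => u (k + 1) / u k) atTop (𝓝 L)) (hLs : L < s) :
    ∃ C > 0, ∀ᶠ k in atTop, u k ≤ C * s ^ k := by
  have hs : 0 < s := (ge_of_tendsto' h fun k => (div_pos (hu _) (hu k)).le).trans_lt hLs
  obtain ⟨K, hK⟩ := eventually_atTop.1 (h.eventually_lt_const hLs)
  refine ⟨u K / s ^ K, div_pos (hu K) (pow_pos hs K), eventually_atTop.2 ⟨K, fun k hk => ?_⟩⟩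
  have hgeom := le_geom (u := fun j => u (K + j)) hs.le (k - K) fun j _ =>
    ((div_lt_iff₀ (hu _)).1 (hK (K + j) (by omega))).le
  obtain ⟨j, rfl⟩ := Nat.exists_eq_add_of_le hk
  simp only [Nat.add_sub_cancel_left, add_zero] at hgeom
  calc u (K + j) ≤ s ^ j * u K := hgeom
    _ = u K / s ^ K * s ^ (K + j) := by field_simp; ring

lemma exists_eventually_mul_pow_le_of_tendsto_ratio (hu : ∀ k, 0 < u k)
    (h : Tendsto (fun k => u (k + 1) / u k) atTop (𝓝 L)) (hs : 0 < s) (hsL : s < L) :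
    ∃ c > 0, ∀ᶠ k in atTop, c * s ^ k ≤ u k := by
  obtain ⟨K, hK⟩ := eventually_atTop.1 (h.eventually_const_lt hsL)
  refine ⟨u K / s ^ K, div_pos (hu K) (pow_pos hs K), eventually_atTop.2 ⟨K, fun k hk => ?_⟩⟩
  have hgeom := geom_le (u := fun j => u (K + j)) hs.le (k - K) fun j _ =>
    ((lt_div_iff₀ (hu _)).1 (hK (K + j) (by omega))).le
  obtain ⟨j, rfl⟩ := Nat.exists_eq_add_of_le hk
  simp only [Nat.add_sub_cancel_left, add_zero] at hgeom
  calc u K / s ^ K * s ^ (K + j) = s ^ j * u K := by field_simp; ring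
    _ ≤ u (K + j) := hgeom

end GeometricBounds

lemma eventually_exists_two_pow_near {P : ℕ → Prop} (hP : ∀ᶠ k in atTop, P k) :
    ∀ᶠ x : ℝ in atTop, ∃ k, P k ∧ (2 : ℝ) ^ k ≤ x ∧ x < 2 ^ (k + 1) := by
  obtain ⟨K, hK⟩ := eventually_atTop.1 hP
  filter_upwards [eventually_ge_atTop ((2 : ℝ) ^ K)] with x hx
  obtain ⟨k, hkx, hxk⟩ := exists_nat_pow_near ((one_le_pow₀ one_le_two).trans hx) one_lt_two
  have hKk : K < k + 1 := (pow_lt_pow_iff_right₀ one_lt_two).1 (hx.trans_lt hxk)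
  exact ⟨k, hK k (by omega), hkx, hxk⟩

lemma tendsto_ratio_two_pow {f : ℝ → ℝ} {L : ℝ}
    (hf : Tendsto (fun t => f (t * 2) / f t) atTop (𝓝 L)) :
    Tendsto (fun k : ℕ => f (2 ^ (k + 1)) / f (2 ^ k)) atTop (𝓝 L) := by
  simpa only [Function.comp_def, pow_succ] using
    hf.comp (tendsto_pow_atTop_atTop_of_one_lt one_lt_two)

section Potter

variable {f g : ℝ → ℝ} {a σ : ℝ}

lemma Antitone.exists_eventually_rpow_le (hf : Antitone f) (hpos : ∀ t > 0, 0 < f t)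
    (hRV : Tendsto (fun t => f (t * 2) / f t) atTop (𝓝 (2 ^ (-a)))) (haσ : a < σ)
    (hσ : 0 ≤ σ) : ∃ c > 0, ∀ᶠ x in atTop, c * x ^ (-σ) ≤ f x := by
  obtain ⟨c, hc, hk⟩ := exists_eventually_mul_pow_le_of_tendsto_ratio (u := fun k => f (2 ^ k))
    (fun k => hpos _ (by positivity)) (tendsto_ratio_two_pow hRV) (by positivity)
    (rpow_lt_rpow_of_exponent_lt one_lt_two (neg_lt_neg haσ))
  refine ⟨c * 2 ^ (-σ), by positivity, ?_⟩
  filter_upwards [eventually_exists_two_pow_near ((tendsto_add_atTop_nat 1).eventually hk),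
    eventually_gt_atTop 0] with x ⟨k, hck, hkx, hxk⟩ hx
  calc c * 2 ^ (-σ) * x ^ (-σ) = c * (2 * x) ^ (-σ) := by
        rw [mul_rpow zero_le_two hx.le]; ring
    _ ≤ c * ((2 : ℝ) ^ (k + 1)) ^ (-σ) := by
        refine mul_le_mul_of_nonneg_left (rpow_le_rpow_of_nonpos (by positivity) ?_
          (neg_nonpos.2 hσ)) hc.le
        rw [pow_succ']
        gcongr
    _ = c * (2 ^ (-σ)) ^ (k + 1) := by rw [rpow_pow_comm zero_le_two]
    _ ≤ f (2 ^ (k + 1)) := hck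
    _ ≤ f x := hf hxk.le

lemma Antitone.exists_eventually_le_rpow (hf : Antitone f) (hfg : ∀ x > 0, f x ≤ g x)
    (hpos : ∀ t > 0, 0 < g t) (hRV : Tendsto (fun t => g (t * 2) / g t) atTop (𝓝 (2 ^ (-a))))
    (hσa : σ < a) (hσ : 0 ≤ σ) : ∃ C > 0, ∀ᶠ x in atTop, f x ≤ C * x ^ (-σ) := by
  obtain ⟨C, hC, hk⟩ := exists_eventually_le_mul_pow_of_tendsto_ratio (u := fun k => g (2 ^ k))
    (fun k => hpos _ (by positivity)) (tendsto_ratio_two_pow hRV)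
    (rpow_lt_rpow_of_exponent_lt one_lt_two (neg_lt_neg hσa))
  refine ⟨C * 2 ^ σ, by positivity, ?_⟩
  filter_upwards [eventually_exists_two_pow_near hk, eventually_gt_atTop 0]
    with x ⟨k, hCk, hkx, hxk⟩ hx
  calc f x ≤ f (2 ^ k) := hf hkx
    _ ≤ g (2 ^ k) := hfg _ (by positivity)
    _ ≤ C * (2 ^ (-σ)) ^ k := hCk
    _ = C * 2 ^ σ * (2 * (2 : ℝ) ^ k) ^ (-σ) := by
        rw [rpow_pow_comm zero_le_two, mul_rpow zero_le_two (by positivity), rpow_neg zero_le_two]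
        field_simp
    _ ≤ C * 2 ^ σ * x ^ (-σ) := by
        refine mul_le_mul_of_nonneg_left (rpow_le_rpow_of_nonpos hx ?_ (neg_nonpos.2 hσ))
          (by positivity)
        rw [← pow_succ']
        exact hxk.le

end Potter

lemma tendsto_mul_ratio {f g : ℝ → ℝ} {x a b : ℝ} (hx : 0 < x)
    (hf : Tendsto (fun t => f (t * x) / f t) atTop (𝓝 (x ^ (-a))))
    (hg : Tendsto (fun t => g (t * x) / g t) atTop (𝓝 (x ^ (-b)))) :
    Tendsto (fun t => f (t * x) * g (t * x) / (f t * g t)) atTop (𝓝 (x ^ (-(a + b)))) := by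
  rw [neg_add, rpow_add hx]
  simpa only [mul_div_mul_comm] using hf.mul hg

lemma exists_eventually_mul_rpow_inv_pow_le {F : ℝ → ℝ} {b : ℕ → ℝ} {c a ρ : ℝ}
    (hc : 0 < c) (ha : 0 < a) (hρ : 0 ≤ ρ) (hF : ∀ᶠ x in atTop, c * x ^ (-a) ≤ F x)
    (hb : Tendsto b atTop atTop) (hbn : Tendsto (fun n => ρ ^ n * F (b n)) atTop (𝓝 1)) :
    ∃ c' > 0, ∀ᶠ n in atTop, c' * (ρ ^ a⁻¹) ^ n ≤ b n := by
  refine ⟨(c / 2) ^ a⁻¹, by positivity, ?_⟩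
  filter_upwards [hb.eventually hF, hb.eventually_gt_atTop 0,
    hbn.eventually_lt_const one_lt_two] with n hFn hbn0 hρn
  have hFn' : c ≤ F (b n) * b n ^ a := by
    rwa [rpow_neg hbn0.le, ← div_eq_mul_inv, div_le_iff₀ (by positivity)] at hFn
  have key : c / 2 * ρ ^ n ≤ b n ^ a := by
    calc c / 2 * ρ ^ n ≤ F (b n) * b n ^ a / 2 * ρ ^ n := by gcongr
      _ = ρ ^ n * F (b n) * b n ^ a / 2 := by ring
      _ ≤ 2 * b n ^ a / 2 := by gcongr
      _ = b n ^ a := by ring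
  calc (c / 2) ^ a⁻¹ * (ρ ^ a⁻¹) ^ n = (c / 2 * ρ ^ n) ^ a⁻¹ := by
        rw [mul_rpow (by positivity) (by positivity), rpow_pow_comm hρ]
    _ ≤ (b n ^ a) ^ a⁻¹ := rpow_le_rpow (by positivity) key (inv_nonneg.2 ha.le)
    _ = b n := rpow_rpow_inv hbn0.le ha.ne'

lemma mul_rpow_inv_rpow_neg_lt_one {ρ a σ : ℝ} (hρ : 1 < ρ) (ha : 0 < a) (haσ : a < σ) :
    ρ * (ρ ^ a⁻¹) ^ (-σ) < 1 := by
  have hρ0 : 0 < ρ := one_pos.trans hρ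
  have hexp : 1 + a⁻¹ * -σ < 0 := by
    rw [mul_neg, ← div_eq_inv_mul, ← sub_eq_add_neg, sub_neg, one_lt_div ha]
    exact haσ
  rw [← rpow_mul hρ0.le, ← rpow_one_add' hρ0.le hexp.ne]
  exact rpow_lt_one_of_one_lt_of_neg hρ hexp

lemma tendsto_rpow_mul_pow_of_lt_one (s : ℝ) {q : ℝ} (hq0 : 0 < q) (hq : q < 1) :
    Tendsto (fun n : ℕ => (n : ℝ) ^ s * q ^ n) atTop (𝓝 0) := by
  refine ((tendsto_rpow_mul_exp_neg_mul_atTop_nhds_zero s _ (neg_pos.2 (log_neg hq0 hq))).comp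
    tendsto_natCast_atTop_atTop).congr fun n => ?_
  simp [← rpow_natCast, rpow_def_of_pos hq0, mul_comm]

lemma tendsto_pow_div_natCast_atTop {r : ℝ} (hr : 1 < r) :
    Tendsto (fun n : ℕ => r ^ n / n) atTop atTop := by
  have h : Tendsto (fun n : ℕ => (n : ℝ) / r ^ n) atTop (𝓝[>] 0) := by
    refine tendsto_nhdsWithin_iff.2
      ⟨by simpa using tendsto_pow_const_div_const_pow_of_one_lt 1 hr, ?_⟩
    filter_upwards [eventually_gt_atTop 0] with n hn
    exact div_pos (Nat.cast_pos.2 hn) (pow_pos (one_pos.trans hr) n)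
  simpa only [Pi.inv_def, inv_div] using h.inv_tendsto_nhdsGT_zero

lemma tendsto_pow_mul_rpow_mul_of_le_rpow {F : ℝ → ℝ} {b : ℕ → ℝ} {C c r ρ σ θ : ℝ} (E : ℝ)
    (hF0 : ∀ t, 0 ≤ F t) (hC : 0 ≤ C) (hF : ∀ᶠ x in atTop, F x ≤ C * x ^ (-σ)) (hσ : 0 ≤ σ)
    (hc : 0 < c) (hr : 1 < r) (hb : ∀ᶠ n in atTop, c * r ^ n ≤ b n) (hθ : 0 < θ)
    (hρ : 0 < ρ) (hq : ρ * r ^ (-σ) < 1) :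
    Tendsto (fun n : ℕ => ρ ^ n * (n : ℝ) ^ E * F (b n * θ / n)) atTop (𝓝 0) := by
  have hr0 : 0 < r := one_pos.trans hr
  have hlow : ∀ᶠ n : ℕ in atTop, c * θ * (r ^ n / n) ≤ b n * θ / n := by
    filter_upwards [hb] with n hn
    rw [← mul_div_assoc, mul_right_comm]
    gcongr
  have ht : Tendsto (fun n : ℕ => b n * θ / n) atTop atTop :=
    tendsto_atTop_mono' atTop hlow
      ((tendsto_pow_div_natCast_atTop hr).const_mul_atTop (mul_pos hc hθ))
  have hbound : ∀ᶠ n : ℕ in atTop, ρ ^ n * (n : ℝ) ^ E * F (b n * θ / n) ≤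
      C * (c * θ) ^ (-σ) * ((n : ℝ) ^ (E + σ) * (ρ * r ^ (-σ)) ^ n) := by
    filter_upwards [ht.eventually hF, hlow, eventually_gt_atTop 0] with n hFn hlown hn
    have hn' : (0 : ℝ) < n := Nat.cast_pos.2 hn
    calc ρ ^ n * (n : ℝ) ^ E * F (b n * θ / n)
        ≤ ρ ^ n * (n : ℝ) ^ E * (C * (b n * θ / n) ^ (-σ)) := by gcongr
      _ ≤ ρ ^ n * (n : ℝ) ^ E * (C * (c * θ * (r ^ n / n)) ^ (-σ)) := by
        gcongr ρ ^ n * (n : ℝ) ^ E * (C * ?_)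
        exact rpow_le_rpow_of_nonpos (by positivity) hlown (neg_nonpos.2 hσ)
      _ = C * (c * θ) ^ (-σ) * ((n : ℝ) ^ (E + σ) * (ρ * r ^ (-σ)) ^ n) := by
        rw [mul_rpow (by positivity) (by positivity), div_rpow (by positivity) hn'.le,
          ← rpow_pow_comm hr0.le, rpow_neg hn'.le, rpow_add hn', mul_pow]
        field_simp
  refine squeeze_zero' (Eventually.of_forall fun n => by have := hF0 (b n * θ / n); positivity)
    hbound ?_
  simpa using (tendsto_rpow_mul_pow_of_lt_one (E + σ) (by positivity) hq).const_mul
    (C * (c * θ) ^ (-σ))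

theorem stmt12_general (eps FQ Fp : ℝ → ℝ) (γ α ρ : ℝ)
    (hγ : 0 < γ) (hα : 0 < α) (hρ : 1 < ρ)
    (heps_pos : ∀ t > (0:ℝ), 0 < eps t)
    (hFQ_pos : ∀ t, 0 < FQ t) (hFQ_anti : Antitone FQ)
    (hFp_nonneg : ∀ t, 0 ≤ Fp t) (hFp_anti : Antitone Fp)
    (hepsRV : ∀ x > (0:ℝ), Tendsto (fun t : ℝ => eps (t * x) / eps t) atTop (𝓝 (x ^ (-γ))))
    (hFQRV : ∀ x > (0:ℝ), Tendsto (fun t : ℝ => FQ (t * x) / FQ t) atTop (𝓝 (x ^ (-α))))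
    (hdom : ∀ x > (0:ℝ), Fp x ≤ eps x * FQ x)
    (b : ℕ → ℝ) (hb_top : Tendsto b atTop atTop)
    (hbn : Tendsto (fun n : ℕ => ρ ^ n * FQ (b n)) atTop (𝓝 1)) :
    ∀ θ > (0:ℝ), ∃ η > (0:ℝ),
      Tendsto (fun n : ℕ => ρ ^ n * (n : ℝ) ^ (2 + α + γ + η) * Fp (b n * θ / n))
        atTop (𝓝 0) ∧
      Tendsto (fun n : ℕ => ρ ^ n * (n : ℝ) * Fp (b n * θ / n)) atTop (𝓝 0) := by
  intro θ hθ
  have ha : 0 < α + γ / 3 := by positivity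
  have haσ : α + γ / 3 < α + 2 * γ / 3 := by linarith
  obtain ⟨c, hc, hFQ_low⟩ := hFQ_anti.exists_eventually_rpow_le (fun t _ => hFQ_pos t)
    (hFQRV 2 two_pos) (lt_add_of_pos_right α (by positivity)) ha.le
  obtain ⟨C, hC, hFp_up⟩ := hFp_anti.exists_eventually_le_rpow hdom
    (fun t ht => mul_pos (heps_pos t ht) (hFQ_pos t))
    (tendsto_mul_ratio two_pos (hepsRV 2 two_pos) (hFQRV 2 two_pos))
    (show α + 2 * γ / 3 < γ + α by linarith) (by positivity)
  obtain ⟨c', hc', hb⟩ := exists_eventually_mul_rpow_inv_pow_le hc ha (by positivity) hFQ_low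
    hb_top hbn
  have hr : 1 < ρ ^ (α + γ / 3)⁻¹ := one_lt_rpow hρ (by positivity)
  have hq := mul_rpow_inv_rpow_neg_lt_one hρ ha haσ
  refine ⟨1, one_pos, ?_, ?_⟩
  · exact tendsto_pow_mul_rpow_mul_of_le_rpow _ hFp_nonneg hC.le hFp_up (by positivity) hc' hr hb
      hθ (by positivity) hq
  · simpa using tendsto_pow_mul_rpow_mul_of_le_rpow 1 hFp_nonneg hC.le hFp_up (by positivity) hc'
      hr hb hθ (by positivity) hq

/-- if `ε` is regularly varying of index `-γ` (`γ > 0`), the tail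
`F̄_Q` is regularly varying of index `-α` (`α > 0`), `P(|X^{(p)}| > x) = F̄_p(x) ≤
ε(x) F̄_Q(x)`, and `bₙ → ∞` satisfies `ρⁿ F̄_Q(bₙ) → 1` with `ρ > 1`, then for
every `θ > 0` there is `η > 0` with
`ρⁿ n^{2+α+γ+η} F̄_p(bₙθ/n) → 0`; in particular `ρⁿ · n · P(n|X^{(p)}| > bₙθ) → 0`. -/
theorem stmt12 (eps FQ Fp : ℝ → ℝ) (γ α ρ : ℝ)
    (hγ : 0 < γ) (hα : 0 < α) (hρ : 1 < ρ)
    (heps_pos : ∀ t > (0:ℝ), 0 < eps t)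
    (hFQ_pos : ∀ t, 0 < FQ t) (hFQ_anti : Antitone FQ)
    (hFp_nonneg : ∀ t, 0 ≤ Fp t) (hFp_anti : Antitone Fp)
    (hepsRV : ∀ x > (0:ℝ), Tendsto (fun t : ℝ => eps (t * x) / eps t) atTop (𝓝 (x ^ (-γ))))
    (hFQRV : ∀ x > (0:ℝ), Tendsto (fun t : ℝ => FQ (t * x) / FQ t) atTop (𝓝 (x ^ (-α))))
    (hdom : ∀ x > (0:ℝ), Fp x ≤ eps x * FQ x)
    (b : ℕ → ℝ) (hb_pos : ∀ n, 0 < b n) (hb_mono : Monotone b)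
    (hb_top : Tendsto b atTop atTop)
    (hbn : Tendsto (fun n : ℕ => ρ ^ n * FQ (b n)) atTop (𝓝 1)) :
    ∀ θ > (0:ℝ), ∃ η > (0:ℝ),
      Tendsto (fun n : ℕ => ρ ^ n * (n : ℝ) ^ (2 + α + γ + η) * Fp (b n * θ / n))
        atTop (𝓝 0) ∧
      Tendsto (fun n : ℕ => ρ ^ n * (n : ℝ) * Fp (b n * θ / n)) atTop (𝓝 0) :=
  stmt12_general eps FQ Fp γ α ρ hγ hα hρ heps_pos hFQ_pos hFQ_anti hFp_nonneg hFp_anti hepsRV hFQRV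
    hdom b hb_top hbn
end

section
/- Suppose for each p = 1,…,Q, the Q-dimensional truncated displacement vector satisfies ρⁿ P(b_n^{-1}(X₁^{(Q)},…,X_B^{(Q)}) ∈ ·) → λ^{(B)} in the Hult–Lindskog sense on ℝ^B\{0}, and that the random vector à (of branching data) is independent of the displacement vector and takes finitely many values. Then jointly ρⁿ P(b_n^{-1} X̃ ∈ ·, Ã ∈ ·) converges in the Hult–Lindskog sense to τ ⊗ 𝒢, where 𝒢 is the law of Ã, X̃ is a finite concatenation of independent copies of (X₁^{(Q)},…,X_B^{(Q)}), and τ = Σ over blocks of the measure that puts λ^{(B)} on one block of coordinates and δ₀ on all others. -/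
/-!
Write `Zₙ = bₙ⁻¹ X̃` and split a test function `F` on `(ℝ^B)^L` as
`F z = ∑ₗ F (ιₗ zₗ) + D z`, where `ιₗ` puts a vector into block `l` and zeros elsewhere.
The single-block terms converge by the hypothesis on each block. The defect `D` is bounded and
vanishes near `0` and on the axes `⋃ₗ range ιₗ`. Two blocks are large at once only with
probability `O(ρ⁻ⁿ)²` by independence, and one block exceeds a large `R` only with scaled
probability small in `R`; elsewhere `z` lies in a compact set close to an axis, where uniform
continuity makes `D` small. Finally, independence of `Ã` factors `P(Ã = s)` out of the
restricted integral.
-/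

open MeasureTheory ProbabilityTheory Filter Topology

/-- The test functions of Hult–Lindskog convergence on `E ∖ {0}`. -/
structure IsTestFunction {E : Type*} [SeminormedAddGroup E] (f : E → ℝ) : Prop where
  continuous : Continuous f
  bounded : ∃ C, ∀ y, |f y| ≤ C
  eventually_zero : ∃ δ > 0, ∀ y, ‖y‖ < δ → f y = 0

noncomputable def cutoff {E : Type*} [SeminormedAddGroup E] (c : ℝ) (y : E) : ℝ :=
  min 1 (max (2 * ‖y‖ / c - 1) 0)

section Cutoff

variable {E : Type*} [SeminormedAddGroup E]

lemma cutoff_nonneg (c : ℝ) (y : E) : 0 ≤ cutoff c y :=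
  le_min zero_le_one (le_max_right _ _)

lemma abs_cutoff_le_one (c : ℝ) (y : E) : |cutoff c y| ≤ 1 :=
  (abs_of_nonneg (cutoff_nonneg c y)).trans_le (min_le_left _ _)

@[fun_prop]
lemma continuous_cutoff (c : ℝ) : Continuous (cutoff (E := E) c) := by
  unfold cutoff; fun_prop

lemma cutoff_eq_zero {c : ℝ} (hc : 0 < c) {y : E} (h : ‖y‖ < c / 2) : cutoff c y = 0 := by
  have : 2 * ‖y‖ / c - 1 < 0 := by
    rw [sub_neg, div_lt_one hc]; linarith
  simp [cutoff, max_eq_right this.le]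

lemma cutoff_eq_one {c : ℝ} (hc : 0 < c) {y : E} (h : c ≤ ‖y‖) : cutoff c y = 1 := by
  have h1 : (1 : ℝ) ≤ 2 * ‖y‖ / c - 1 := by
    rw [le_sub_iff_add_le, le_div_iff₀ hc]; linarith
  rw [cutoff, max_eq_left (zero_le_one.trans h1), min_eq_left h1]

lemma cutoff_le_cutoff {c c' : ℝ} (hc : 0 < c) (hcc : c ≤ c') (y : E) :
    cutoff c' y ≤ cutoff c y :=
  min_le_min le_rfl (max_le_max (sub_le_sub_right
    (div_le_div_of_nonneg_left (by positivity) hc hcc) 1) le_rfl)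

lemma tendsto_cutoff_atTop (y : E) : Tendsto (fun c : ℝ => cutoff c y) atTop (𝓝 0) := by
  refine tendsto_const_nhds.congr' ?_
  filter_upwards [eventually_gt_atTop (2 * ‖y‖)] with c hc
  exact (cutoff_eq_zero (by linarith [norm_nonneg y]) (by linarith)).symm

lemma isTestFunction_cutoff {c : ℝ} (hc : 0 < c) : IsTestFunction (cutoff (E := E) c) :=
  ⟨continuous_cutoff c, ⟨1, abs_cutoff_le_one c⟩,
    ⟨c / 2, by positivity, fun _ => cutoff_eq_zero hc⟩⟩

end Cutoff

namespace IsTestFunction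

variable {E : Type*} [SeminormedAddGroup E] {f g : E → ℝ}

lemma add (hf : IsTestFunction f) (hg : IsTestFunction g) : IsTestFunction (f + g) := by
  obtain ⟨Cf, hCf⟩ := hf.bounded
  obtain ⟨Cg, hCg⟩ := hg.bounded
  obtain ⟨δf, hδf, hf0⟩ := hf.eventually_zero
  obtain ⟨δg, hδg, hg0⟩ := hg.eventually_zero
  refine ⟨hf.continuous.add hg.continuous, ⟨Cf + Cg, fun y => ?_⟩,
    ⟨min δf δg, lt_min hδf hδg, fun y hy => ?_⟩⟩
  · exact (abs_add_le _ _).trans (add_le_add (hCf y) (hCg y))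
  · simp [hf0 y (hy.trans_le (min_le_left _ _)), hg0 y (hy.trans_le (min_le_right _ _))]

lemma const_mul (hf : IsTestFunction f) (a : ℝ) : IsTestFunction (fun y => a * f y) := by
  obtain ⟨C, hC⟩ := hf.bounded
  obtain ⟨δ, hδ, hf0⟩ := hf.eventually_zero
  refine ⟨continuous_const.mul hf.continuous, ⟨|a| * C, fun y => ?_⟩,
    ⟨δ, hδ, fun y hy => by simp [hf0 y hy]⟩⟩
  rw [abs_mul]
  exact mul_le_mul_of_nonneg_left (hC y) (abs_nonneg a)

variable {Ω : Type*} [MeasurableSpace Ω] {P : Measure Ω} [IsFiniteMeasure P]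
  [MeasurableSpace E] [OpensMeasurableSpace E]

lemma integrable_comp (hf : IsTestFunction f) {X : Ω → E} (hX : Measurable X) :
    Integrable (fun ω => f (X ω)) P := by
  obtain ⟨C, hC⟩ := hf.bounded
  exact .of_bound (hf.continuous.measurable.comp hX).aestronglyMeasurable C
    (ae_of_all _ fun ω => hC (X ω))

lemma integrable_mul_comp (hf : IsTestFunction f) {X X' : Ω → E} (hX : Measurable X)
    (hX' : Measurable X') : Integrable (fun ω => f (X ω) * f (X' ω)) P := by
  obtain ⟨C, hC⟩ := hf.bounded
  exact (hf.integrable_comp hX').bdd_mul (hf.continuous.measurable.comp hX).aestronglyMeasurable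
    (ae_of_all _ fun ω => hC (X ω))

end IsTestFunction

lemma tendsto_integral_of_antitone_of_nonneg {α : Type*} [MeasurableSpace α] {ν : Measure α}
    {g : ℕ → α → ℝ} (hmeas : ∀ k, AEStronglyMeasurable (g k) ν)
    (hnonneg : ∀ k x, 0 ≤ g k x) (hanti : Antitone g)
    (hlim : ∀ x, Tendsto (fun k => g k x) atTop (𝓝 0)) :
    Tendsto (fun k => ∫ x, g k x ∂ν) atTop (𝓝 0) := by
  by_cases h : ∃ k₀, Integrable (g k₀) ν
  · obtain ⟨k₀, hk₀⟩ := h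
    simpa using tendsto_integral_filter_of_dominated_convergence (g k₀)
      (Eventually.of_forall hmeas)
      ((eventually_ge_atTop k₀).mono fun k hk => ae_of_all _ fun x => by
        rw [Real.norm_eq_abs, abs_of_nonneg (hnonneg k x)]; exact hanti hk x)
      hk₀ (ae_of_all _ hlim)
  · push Not at h
    -- non-integrable functions have integral `0` by convention
    simp only [integral_undef (h _)]
    exact tendsto_const_nhds

lemma tendsto_integral_inv_mul_cutoff_add_mul_cutoff {E : Type*} [NormedAddCommGroup E]
    [MeasurableSpace E] [OpensMeasurableSpace E] (ν : Measure E) {δ K : ℝ} (hδ : 0 < δ)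
    (hK : 0 ≤ K) :
    Tendsto (fun k : ℕ => ∫ y, ((k + 1 : ℝ)⁻¹ * cutoff δ y + K * cutoff (δ + k) y) ∂ν)
      atTop (𝓝 0) := by
  refine tendsto_integral_of_antitone_of_nonneg
    (fun k => (by fun_prop : Continuous _).aestronglyMeasurable)
    (fun k y => add_nonneg (mul_nonneg (by positivity) (cutoff_nonneg _ _))
      (mul_nonneg hK (cutoff_nonneg _ _))) (fun k k' hkk' y => ?_) (fun y => ?_)
  · exact add_le_add (mul_le_mul_of_nonneg_right (by gcongr) (cutoff_nonneg _ _))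
      (mul_le_mul_of_nonneg_left (cutoff_le_cutoff (by positivity) (by gcongr) y) hK)
  · simpa using (tendsto_one_div_add_atTop_nhds_zero_nat.mul_const (cutoff δ y)).add
      (((tendsto_cutoff_atTop y).comp
        (tendsto_atTop_add_const_left _ δ tendsto_natCast_atTop_atTop)).const_mul K)

section Decomposition

variable {ι E : Type*} [Fintype ι] [DecidableEq ι] [NormedAddCommGroup E]
  {F : (ι → E) → ℝ}

lemma IsTestFunction.comp_single (hF : IsTestFunction F) (l : ι) :
    IsTestFunction (fun y : E => F (Pi.single l y)) := by
  obtain ⟨C, hC⟩ := hF.bounded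
  obtain ⟨δ, hδ, hF0⟩ := hF.eventually_zero
  exact ⟨hF.continuous.comp (continuous_single (A := fun _ : ι => E) l), ⟨C, fun y => hC _⟩,
    ⟨δ, hδ, fun y hy => hF0 _ (by rwa [Pi.norm_single])⟩⟩

lemma abs_sub_sum_single_le_of_abs_le {C : ℝ} (hC : ∀ z, |F z| ≤ C) (z : ι → E) :
    |F z - ∑ l, F (Pi.single l (z l))| ≤ (Fintype.card ι + 1) * C :=
  calc |F z - ∑ l, F (Pi.single l (z l))|
      ≤ |F z| + ∑ l, |F (Pi.single l (z l))| :=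
        (abs_sub _ _).trans (add_le_add_right (Finset.abs_sum_le_sum_abs _ _) _)
    _ ≤ C + ∑ _l : ι, C := add_le_add (hC z) (Finset.sum_le_sum fun l _ => hC _)
    _ = (Fintype.card ι + 1) * C := by simp; ring

lemma abs_sub_single_lt {η R ε : ℝ} (hη : 0 < η)
    (hUC : ∀ u ∈ Metric.closedBall 0 R, ∀ v ∈ Metric.closedBall 0 R,
      dist u v < η → dist (F u) (F v) < ε)
    {z : ι → E} (hR : ∀ l, ‖z l‖ < R) {i : ι} (hη_ne : ∀ l ≠ i, ‖z l‖ < η) :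
    |F z - F (Pi.single i (z i))| < ε := by
  have hclose : dist z (Pi.single i (z i)) < η := by
    rw [dist_eq_norm, pi_norm_lt_iff hη]
    intro l
    by_cases hl : l = i
    · simp [hl, hη]
    · simpa [hl] using hη_ne l hl
  rw [← Real.dist_eq]
  exact hUC z (mem_closedBall_zero_iff.2 ((pi_norm_le_iff_of_nonneg
      ((norm_nonneg _).trans (hR i).le)).2 fun l => (hR l).le))
    _ (mem_closedBall_zero_iff.2 (by rw [Pi.norm_single]; exact (hR i).le)) hclose

lemma abs_sub_sum_single_le {g h : E → ℝ} {C δ η R ε : ℝ}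
    (hC : ∀ z, |F z| ≤ C) (hF : ∀ z, ‖z‖ < δ → F z = 0)
    (hη : 0 < η) (hηδ : η ≤ δ)
    (hUC : ∀ u ∈ Metric.closedBall 0 R, ∀ v ∈ Metric.closedBall 0 R,
      dist u v < η → dist (F u) (F v) < ε)
    (hg : ∀ y, 0 ≤ g y) (hgδ : ∀ y, δ ≤ ‖y‖ → ε ≤ g y)
    (hgR : ∀ y, R ≤ ‖y‖ → (Fintype.card ι + 1) * C ≤ g y)
    (hh : ∀ y, 0 ≤ h y) (hhη : ∀ y, η ≤ ‖y‖ → 1 ≤ h y) (z : ι → E) :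
    |F z - ∑ l, F (Pi.single l (z l))| ≤
      ∑ l, g (z l) + (Fintype.card ι + 1) * C *
        ∑ p ∈ Finset.univ.offDiag, h (z p.1) * h (z p.2) := by
  set K : ℝ := (Fintype.card ι + 1) * C
  have hK : 0 ≤ K := mul_nonneg (by positivity) ((abs_nonneg _).trans (hC 0))
  have hgsum : 0 ≤ ∑ l, g (z l) := Finset.sum_nonneg fun l _ => hg (z l)
  have hpair_nonneg : 0 ≤ K * ∑ p ∈ Finset.univ.offDiag, h (z p.1) * h (z p.2) :=
    mul_nonneg hK (Finset.sum_nonneg fun p _ => mul_nonneg (hh _) (hh _))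
  have hle_g : ∀ i, g (z i) ≤ ∑ l, g (z l) := fun i =>
    Finset.single_le_sum (fun l _ => hg (z l)) (Finset.mem_univ i)
  have hbound := abs_sub_sum_single_le_of_abs_le hC z
  by_cases hpair : ∃ i j, i ≠ j ∧ η ≤ ‖z i‖ ∧ η ≤ ‖z j‖
  · obtain ⟨i, j, hij, hi, hj⟩ := hpair
    have hone : 1 ≤ ∑ p ∈ Finset.univ.offDiag, h (z p.1) * h (z p.2) :=
      (one_le_mul_of_one_le_of_one_le (hhη _ hi) (hhη _ hj)).trans
        (Finset.single_le_sum (f := fun p : ι × ι => h (z p.1) * h (z p.2))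
          (fun p _ => mul_nonneg (hh _) (hh _)) (a := (i, j)) (by simpa using hij))
    exact hbound.trans ((le_mul_of_one_le_right hK hone).trans (le_add_of_nonneg_left hgsum))
  by_cases htail : ∃ i, R ≤ ‖z i‖
  · obtain ⟨i, hi⟩ := htail
    exact hbound.trans (((hgR _ hi).trans (hle_g i)).trans (le_add_of_nonneg_right hpair_nonneg))
  push Not at hpair htail
  by_cases hlarge : ∃ i, δ ≤ ‖z i‖
  · obtain ⟨i, hi⟩ := hlarge
    have hsmall : ∀ l ≠ i, ‖z l‖ < η := fun l hl => hpair i l hl.symm (hηδ.trans hi)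
    have hsum : ∑ l, F (Pi.single l (z l)) = F (Pi.single i (z i)) :=
      Finset.sum_eq_single i (fun l _ hl => hF _ (by
        rw [Pi.norm_single]; exact (hsmall l hl).trans_le hηδ)) (by simp)
    rw [hsum]
    exact (abs_sub_single_lt hη hUC htail hsmall).le.trans
      (((hgδ _ hi).trans (hle_g i)).trans (le_add_of_nonneg_right hpair_nonneg))
  · push Not at hlarge
    rw [hF z ((pi_norm_lt_iff (hη.trans_le hηδ)).2 hlarge),
      Finset.sum_eq_zero fun l _ => hF _ (by rw [Pi.norm_single]; exact hlarge l)]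
    simpa using add_nonneg hgsum hpair_nonneg

end Decomposition

section Probability

variable {Ω : Type*} [MeasurableSpace Ω] {P : Measure Ω} {a : ℕ → ℝ}

lemma tendsto_mul_integral_mul_of_indepFun (ha : Tendsto a atTop atTop) {X X' : ℕ → Ω → ℝ}
    (hX : ∀ n, AEStronglyMeasurable (X n) P) (hX' : ∀ n, AEStronglyMeasurable (X' n) P)
    (hind : ∀ n, IndepFun (X n) (X' n) P) {c c' : ℝ}
    (hc : Tendsto (fun n => a n * ∫ ω, X n ω ∂P) atTop (𝓝 c))
    (hc' : Tendsto (fun n => a n * ∫ ω, X' n ω ∂P) atTop (𝓝 c')) :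
    Tendsto (fun n => a n * ∫ ω, X n ω * X' n ω ∂P) atTop (𝓝 0) := by
  have h := (hc.mul hc').mul ha.inv_tendsto_atTop
  rw [mul_zero] at h
  refine h.congr' ?_
  filter_upwards [ha.eventually_ne_atTop 0] with n hn
  rw [(hind n).integral_fun_mul_eq_mul_integral (hX n) (hX' n), Pi.inv_apply]
  field_simp

variable [IsFiniteMeasure P] {ι E : Type*} [Fintype ι] [NormedAddCommGroup E]
  [MeasurableSpace E] [BorelSpace E] {Z : ℕ → ι → Ω → E} {ν : Measure E}

lemma tendsto_mul_integral_sum_add_sum_offDiag (hZ : ∀ n l, Measurable (Z n l))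
    (hind : ∀ n, Pairwise fun i j => IndepFun (Z n i) (Z n j) P) (ha : Tendsto a atTop atTop)
    (hconv : ∀ l f, IsTestFunction f →
      Tendsto (fun n => a n * ∫ ω, f (Z n l ω) ∂P) atTop (𝓝 (∫ y, f y ∂ν)))
    {g h : E → ℝ} (hg : IsTestFunction g) (hh : IsTestFunction h) (K : ℝ) :
    Tendsto (fun n => a n * ∫ ω, (∑ l, g (Z n l ω) +
        K * ∑ p ∈ Finset.univ.offDiag, h (Z n p.1 ω) * h (Z n p.2 ω)) ∂P)
      atTop (𝓝 (Fintype.card ι * ∫ y, g y ∂ν)) := by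
  have hint : ∀ n l, Integrable (fun ω => g (Z n l ω)) P := fun n l =>
    hg.integrable_comp (hZ n l)
  have hint₂ : ∀ n (p : ι × ι), Integrable (fun ω => h (Z n p.1 ω) * h (Z n p.2 ω)) P :=
    fun n p => hh.integrable_mul_comp (hZ n p.1) (hZ n p.2)
  have hpair : ∀ p ∈ (Finset.univ : Finset ι).offDiag,
      Tendsto (fun n => a n * ∫ ω, h (Z n p.1 ω) * h (Z n p.2 ω) ∂P) atTop (𝓝 0) :=
    fun p hp => tendsto_mul_integral_mul_of_indepFun ha
      (fun n => (hh.integrable_comp (hZ n p.1)).aestronglyMeasurable)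
      (fun n => (hh.integrable_comp (hZ n p.2)).aestronglyMeasurable)
      (fun n => (hind n (Finset.mem_offDiag.1 hp).2.2).comp hh.continuous.measurable
        hh.continuous.measurable)
      (hconv p.1 h hh) (hconv p.2 h hh)
  have hlim := (tendsto_finsetSum Finset.univ fun l _ => hconv l g hg).add
    ((tendsto_finsetSum _ hpair).const_mul K)
  simp only [Finset.sum_const_zero, mul_zero, add_zero, Finset.sum_const, Finset.card_univ,
    nsmul_eq_mul] at hlim
  refine hlim.congr fun n => ?_
  rw [integral_add (integrable_finsetSum _ fun l _ => hint n l)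
      ((integrable_finsetSum _ fun p _ => hint₂ n p).const_mul K), integral_const_mul,
    integral_finsetSum _ fun l _ => hint n l, integral_finsetSum _ fun p _ => hint₂ n p]
  simp only [mul_add, Finset.mul_sum, mul_left_comm]

lemma tendsto_mul_integral_sub_sum_single [DecidableEq ι] [ProperSpace E]
    (hZ : ∀ n l, Measurable (Z n l))
    (hind : ∀ n, Pairwise fun i j => IndepFun (Z n i) (Z n j) P) (ha : Tendsto a atTop atTop)
    (hconv : ∀ l f, IsTestFunction f →
      Tendsto (fun n => a n * ∫ ω, f (Z n l ω) ∂P) atTop (𝓝 (∫ y, f y ∂ν)))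
    {F : (ι → E) → ℝ} (hF : IsTestFunction F) :
    Tendsto (fun n => a n * ∫ ω, (F (fun l => Z n l ω) - ∑ l, F (Pi.single l (Z n l ω))) ∂P)
      atTop (𝓝 0) := by
  obtain ⟨C, hC⟩ := hF.bounded
  obtain ⟨δ, hδ, hF0⟩ := hF.eventually_zero
  set K : ℝ := (Fintype.card ι + 1) * C
  have hK : 0 ≤ K := mul_nonneg (by positivity) ((abs_nonneg _).trans (hC 0))
  -- `g k` charges `(k + 1)⁻¹` to a block of norm `≥ δ` and `K` to one of norm `≥ δ + k`
  set g : ℕ → E → ℝ := fun k y => (k + 1 : ℝ)⁻¹ * cutoff δ y + K * cutoff (δ + k) y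
  have hg : ∀ k, IsTestFunction (g k) := fun k =>
    ((isTestFunction_cutoff hδ).const_mul _).add
      ((isTestFunction_cutoff (by positivity)).const_mul K)
  rw [NormedAddGroup.tendsto_nhds_zero]
  intro ε hε
  have hg_lim : Tendsto (fun k => ∫ y, g k y ∂ν) atTop (𝓝 0) :=
    tendsto_integral_inv_mul_cutoff_add_mul_cutoff ν hδ hK
  obtain ⟨k, hk⟩ := ((hg_lim.const_mul (Fintype.card ι : ℝ)).eventually_lt_const
    (by simpa using hε)).exists
  obtain ⟨η₀, hη₀, hUC⟩ := Metric.uniformContinuousOn_iff.1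
    ((isCompact_closedBall (0 : ι → E) (δ + k)).uniformContinuousOn_of_continuous
      hF.continuous.continuousOn) (k + 1 : ℝ)⁻¹ (by positivity)
  set η := min η₀ δ
  have hη : 0 < η := lt_min hη₀ hδ
  let G : ℕ → Ω → ℝ := fun n ω => ∑ l, g k (Z n l ω) +
    K * ∑ p ∈ Finset.univ.offDiag, cutoff η (Z n p.1 ω) * cutoff η (Z n p.2 ω)
  have hbound : ∀ n ω, |F (fun l => Z n l ω) - ∑ l, F (Pi.single l (Z n l ω))| ≤ G n ω :=
    fun n ω => abs_sub_sum_single_le hC hF0 hη (min_le_right _ _)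
      (fun u hu v hv huv => hUC u hu v hv (huv.trans_le (min_le_left _ _)))
      (fun y => (add_nonneg (mul_nonneg (by positivity) (cutoff_nonneg _ _))
        (mul_nonneg hK (cutoff_nonneg _ _)) : 0 ≤ g k y))
      (fun y hy => by
        simp only [cutoff_eq_one hδ hy, mul_one]
        exact le_add_of_nonneg_right (mul_nonneg hK (cutoff_nonneg _ _)))
      (fun y hy => by
        simp only [cutoff_eq_one (by positivity) hy, mul_one]
        exact le_add_of_nonneg_left (mul_nonneg (by positivity) (cutoff_nonneg _ _)))
      (cutoff_nonneg η) (fun y hy => (cutoff_eq_one hη hy).ge) _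
  have hint : ∀ n, Integrable (G n) P := fun n =>
    (integrable_finsetSum _ fun l _ => (hg k).integrable_comp (hZ n l)).add
      ((integrable_finsetSum _ fun p _ =>
        (isTestFunction_cutoff hη).integrable_mul_comp (hZ n p.1) (hZ n p.2)).const_mul K)
  filter_upwards [(tendsto_mul_integral_sum_add_sum_offDiag hZ hind ha hconv (hg k)
    (isTestFunction_cutoff hη) K).eventually_lt_const hk, ha.eventually_ge_atTop 0] with n hn han
  rw [Real.norm_eq_abs, abs_mul, abs_of_nonneg han]
  exact (mul_le_mul_of_nonneg_left (abs_integral_le_integral_abs.trans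
    (integral_mono_of_nonneg (ae_of_all _ fun _ => abs_nonneg _) (hint n)
      (ae_of_all _ (hbound n)))) han).trans_lt hn

theorem tendsto_mul_integral_of_pairwise_indepFun [DecidableEq ι] [ProperSpace E]
    (hZ : ∀ n l, Measurable (Z n l))
    (hind : ∀ n, Pairwise fun i j => IndepFun (Z n i) (Z n j) P) (ha : Tendsto a atTop atTop)
    (hconv : ∀ l f, IsTestFunction f →
      Tendsto (fun n => a n * ∫ ω, f (Z n l ω) ∂P) atTop (𝓝 (∫ y, f y ∂ν)))
    {F : (ι → E) → ℝ} (hF : IsTestFunction F) :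
    Tendsto (fun n => a n * ∫ ω, F (fun l => Z n l ω) ∂P) atTop
      (𝓝 (∑ l, ∫ y, F (Pi.single l y) ∂ν)) := by
  have hsingle : ∀ n l, Integrable (fun ω => F (Pi.single l (Z n l ω))) P := fun n l =>
    (hF.comp_single l).integrable_comp (hZ n l)
  have h := (tendsto_mul_integral_sub_sum_single hZ hind ha hconv hF).add
    (tendsto_finsetSum Finset.univ fun l _ => hconv l _ (hF.comp_single l))
  rw [zero_add] at h
  refine h.congr fun n => ?_
  rw [integral_sub (hF.integrable_comp (measurable_pi_lambda _ (hZ n)))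
      (integrable_finsetSum _ fun l _ => hsingle n l),
    integral_finsetSum _ fun l _ => hsingle n l, mul_sub, Finset.mul_sum, sub_add_cancel]

end Probability

theorem stmt19_general {Ω S : Type*} [MeasurableSpace Ω]
    [MeasurableSpace S] [MeasurableSingletonClass S]
    (P : Measure Ω) [IsProbabilityMeasure P]
    {L B : ℕ}
    (Y : Fin L → Ω → (Fin B → ℝ)) (hYmeas : ∀ l, Measurable (Y l))
    (A : Ω → S) (hAmeas : Measurable A)
    (hiid : iIndepFun Y P)
    (hindep : IndepFun (fun ω l => Y l ω) A P)
    (ρ : ℝ) (hρ : 1 < ρ) (b : ℕ → ℝ)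
    (lamB : Measure (Fin B → ℝ))
    (hHL : ∀ (l : Fin L) (f : (Fin B → ℝ) → ℝ), Continuous f →
      (∃ C, ∀ y, |f y| ≤ C) → (∃ δ > (0:ℝ), ∀ y, ‖y‖ < δ → f y = 0) →
      Tendsto (fun n : ℕ => ρ ^ n * ∫ ω, f ((b n)⁻¹ • Y l ω) ∂P)
        atTop (𝓝 (∫ y, f y ∂lamB))) :
    ∀ F : (Fin L → Fin B → ℝ) → ℝ, Continuous F →
      (∃ C, ∀ z, |F z| ≤ C) → (∃ δ > (0:ℝ), ∀ z, ‖z‖ < δ → F z = 0) →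
      ∀ s : S,
        Tendsto (fun n : ℕ =>
            ρ ^ n * ∫ ω in {ω | A ω = s}, F (fun l => (b n)⁻¹ • Y l ω) ∂P)
          atTop
          (𝓝 ((P {ω | A ω = s}).toReal *
            ∑ l : Fin L, ∫ z, F (fun l' => if l' = l then z else 0) ∂lamB)) := by
  intro F hFc hFb hFv s
  have hsplit : ∀ n : ℕ, ∫ ω in {ω | A ω = s}, F (fun l => (b n)⁻¹ • Y l ω) ∂P
      = P.real {ω | A ω = s} * ∫ ω, F (fun l => (b n)⁻¹ • Y l ω) ∂P := fun n =>
    Indep.setIntegral_eq_mul (X := fun ω l => Y l ω) (f := fun x => F fun l => (b n)⁻¹ • x l)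
      hAmeas.comap_le hindep.symm (measurable_pi_lambda _ hYmeas).aemeasurable
      ⟨{s}, measurableSet_singleton s, rfl⟩ (by fun_prop : Continuous _).aestronglyMeasurable
  have hlim := tendsto_mul_integral_of_pairwise_indepFun (P := P) (ν := lamB)
    (Z := fun n l ω => (b n)⁻¹ • Y l ω) (fun n l => (hYmeas l).const_smul (b n)⁻¹)
    (fun n i j hij => (hiid.indepFun hij).comp (measurable_const_smul _)
      (measurable_const_smul _))
    (tendsto_pow_atTop_atTop_of_one_lt hρ)
    (fun l f hf => hHL l f hf.continuous hf.bounded hf.eventually_zero) ⟨hFc, hFb, hFv⟩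
  have hsingle : ∀ (l : Fin L) (z : Fin B → ℝ),
      Pi.single l z = fun l' => if l' = l then z else 0 :=
    fun l z => funext fun l' => Pi.single_apply l z l'
  simp_rw [hsplit, ← measureReal_def, mul_left_comm _ (P.real _)]
  simpa only [hsingle] using hlim.const_mul (P.real {ω | A ω = s})

/-- let `X̃ = (Y 0, …, Y (L-1))` be a concatenation of i.i.d.
copies of a regularly varying `B`-dimensional displacement vector
(`ρⁿ P(bₙ⁻¹ Y ∈ ·) → λ^{(B)}` in the Hult–Lindskog sense on `ℝ^B \ {0}`), and
let the branching data `Ã` take values in a finite type `S`, independently of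
`X̃`.  Then jointly `ρⁿ P(bₙ⁻¹ X̃ ∈ ·, Ã ∈ ·)` converges in the Hult–Lindskog
sense to `τ ⊗ 𝒢`, where `𝒢` is the law of `Ã` and `τ = Σ_l δ₀ ⊗ ⋯ ⊗ λ^{(B)}
(block l) ⊗ ⋯ ⊗ δ₀` puts `λ^{(B)}` on one block and `δ₀` on the others:
tested against bounded continuous `F` vanishing near `0` and events `{Ã = s}`. -/
theorem stmt19 {Ω S : Type*} [MeasurableSpace Ω]
    [Fintype S] [MeasurableSpace S] [MeasurableSingletonClass S]
    (P : Measure Ω) [IsProbabilityMeasure P]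
    {L B : ℕ} (hL : 0 < L)
    (Y : Fin L → Ω → (Fin B → ℝ)) (hYmeas : ∀ l, Measurable (Y l))
    (A : Ω → S) (hAmeas : Measurable A)
    (hiid : iIndepFun Y P)
    (hident : ∀ l l', IdentDistrib (Y l) (Y l') P P)
    (hindep : IndepFun (fun ω l => Y l ω) A P)
    (ρ : ℝ) (hρ : 1 < ρ) (b : ℕ → ℝ) (hb_pos : ∀ n, 0 < b n)
    (lamB : Measure (Fin B → ℝ))
    (hHL : ∀ (l : Fin L) (f : (Fin B → ℝ) → ℝ), Continuous f →
      (∃ C, ∀ y, |f y| ≤ C) → (∃ δ > (0:ℝ), ∀ y, ‖y‖ < δ → f y = 0) →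
      Tendsto (fun n : ℕ => ρ ^ n * ∫ ω, f ((b n)⁻¹ • Y l ω) ∂P)
        atTop (𝓝 (∫ y, f y ∂lamB))) :
    ∀ F : (Fin L → Fin B → ℝ) → ℝ, Continuous F →
      (∃ C, ∀ z, |F z| ≤ C) → (∃ δ > (0:ℝ), ∀ z, ‖z‖ < δ → F z = 0) →
      ∀ s : S,
        Tendsto (fun n : ℕ =>
            ρ ^ n * ∫ ω in {ω | A ω = s}, F (fun l => (b n)⁻¹ • Y l ω) ∂P)
          atTop
          (𝓝 ((P {ω | A ω = s}).toReal *
            ∑ l : Fin L, ∫ z, F (fun l' => if l' = l then z else 0) ∂lamB)) :=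
  stmt19_general P Y hYmeas A hAmeas hiid hindep ρ hρ b lamB hHL
end
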